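/- arXiv:2512.10039 — 7 statements merged into one kernel-verified Lean document; each statement's English description precedes it below -/
import Mathlib

section
/- Under the fulcrum hypotheses, the k-linear map T(V) ⊗_k H → T(V)#_M H sending a ⊗ h to π(T(s)(a)) · π(ι(f(h))) is bijective, where T(s) : T(V) → T(M) is the algebra homomorphism induced by the linear map s. In particular, T(V)#_M H is isomorphic to T(V) ⊗_k H as a k-vector space. -/
open TensorProduct

/-- For a left module `M` over a `k`-algebra `H`, the `k`-linear map `h ↦ h • x`. -/
noncomputable def actL (k : Type*) {H M : Type*} [CommSemiring k] [Semiring H] [Algebra k H]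
    [AddCommMonoid M] [Module k M] [Module H M] [IsScalarTower k H M] (x : M) :
    H →ₗ[k] M where
  toFun h := h • x
  map_add' a b := add_smul a b x
  map_smul' c a := smul_assoc c a x

/-- The adjoint action `h ↦ Σ h₁ a S(h₂)` of a Hopf algebra on itself,
as a `k`-linear map in `h`. -/
noncomputable def adjL (k : Type*) {H : Type*} [CommSemiring k] [Semiring H] [HopfAlgebra k H]
    (a : H) : H →ₗ[k] H :=
  LinearMap.mul' k H ∘ₗ TensorProduct.map (LinearMap.mulRight k a)
    (HopfAlgebra.antipode (R := k)) ∘ₗ Coalgebra.comul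

/-- `Σ ι(h₁ • x) · ι(f h₂)`, as a `k`-linear map in `h`, inside the tensor algebra `T(M)`. -/
noncomputable def commRHS (k : Type*) {H M : Type*} [CommSemiring k] [Semiring H]
    [HopfAlgebra k H] [AddCommMonoid M] [Module k M] [Module H M] [IsScalarTower k H M]
    (f : H →ₗ[k] M) (x : M) : H →ₗ[k] TensorAlgebra k M :=
  LinearMap.mul' k (TensorAlgebra k M) ∘ₗ
    TensorProduct.map ((TensorAlgebra.ι k (M := M)) ∘ₗ actL k x)
      ((TensorAlgebra.ι k (M := M)) ∘ₗ f) ∘ₗ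
    Coalgebra.comul

/-- The defining relations of the fulcrum `T(V)#_M H`:
`ι(f h)ι(f h') = ι(f (h h'))`, `ι(f 1) = 1`, and `ι(f h)ι(x) = Σ ι(h₁ • x)ι(f h₂)`. -/
def fulcrumRel (k : Type*) {H M : Type*} [CommSemiring k] [Semiring H] [HopfAlgebra k H]
    [AddCommMonoid M] [Module k M] [Module H M] [IsScalarTower k H M] (f : H →ₗ[k] M)
    (u v : TensorAlgebra k M) : Prop :=
  (∃ h h' : H, u = TensorAlgebra.ι k (f h) * TensorAlgebra.ι k (f h') ∧
      v = TensorAlgebra.ι k (f (h * h'))) ∨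
  (u = TensorAlgebra.ι k (f 1) ∧ v = 1) ∨
  (∃ (h : H) (x : M), u = TensorAlgebra.ι k (f h) * TensorAlgebra.ι k x ∧
      v = commRHS k f x h)

/-!
The map is onto because its image contains `1` and every generator `π(ι x)` (split `x` along
`M = f(H) ⊕ s(V)`), and is closed under multiplication: the commutation relation moves
`π(ι(f h))` to the right past `π(ι(s v))`.

For injectivity, let the fulcrum act on a model of `T(V) ⊗ H`. Write `x = f(P x) + s(Q x)`.
Then `s(v)` acts by left multiplication with `v`, and `f(h)` acts by an operator `Λ_h`
(`actH`) defined by recursion on word length: `Λ_h(1 ⊗ g) = 1 ⊗ hg` and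
`Λ_h(b w ⊗ g) = Σ ρ(h₁ • s b) Λ_{h₂}(w ⊗ g)`, where `ρ(x) = Λ_{P x} + (Q x)·` (`actM`).
The Hopf identity `Σ h₁ a S(h₂) h₃ = h a` turns `h • f(a) = f(Σ h₁ a S(h₂))` into
`Λ_h Λ_a = Σ ρ(h₁ • f a) Λ_{h₂}`. From this, induction on word length gives
`Λ_h Λ_{h'} = Λ_{hh'}` and the commutation relation. So the action factors through the
fulcrum, and evaluating it at `1 ⊗ 1` is a left inverse of the map.
-/

namespace Fulcrum

open Coalgebra
open TensorAlgebra (ι)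
open MonoidAlgebra (single lsingle)

theorem exists_linearEquiv_prod_of_isCompl {R M₁ M₂ N : Type*} [Ring R] [AddCommGroup M₁]
    [Module R M₁] [AddCommGroup M₂] [Module R M₂] [AddCommGroup N] [Module R N]
    {f : M₁ →ₗ[R] N} {g : M₂ →ₗ[R] N} (hf : Function.Injective f) (hg : Function.Injective g)
    (h : IsCompl (LinearMap.range f) (LinearMap.range g)) :
    ∃ e : N ≃ₗ[R] M₁ × M₂, (∀ a, e (f a) = (a, 0)) ∧ ∀ b, e (g b) = (0, b) := by
  let e₀ := ((LinearEquiv.ofInjective f hf).prodCongr (LinearEquiv.ofInjective g hg)).trans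
    (Submodule.prodEquivOfIsCompl _ _ h)
  exact ⟨e₀.symm, fun a => e₀.symm_apply_eq.mpr (by simp [e₀]),
    fun b => e₀.symm_apply_eq.mpr (by simp [e₀])⟩

theorem range_le_of_tmul_mem {R A B N : Type*} [CommSemiring R] [AddCommMonoid A] [Module R A]
    [AddCommMonoid B] [Module R B] [AddCommMonoid N] [Module R N] (Φ : A ⊗[R] B →ₗ[R] N)
    {p : Submodule R N} (h : ∀ a b, Φ (a ⊗ₜ b) ∈ p) : LinearMap.range Φ ≤ p := by
  rintro _ ⟨z, rfl⟩
  induction z using TensorProduct.induction_on with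
  | zero => simp
  | tmul a b => exact h a b
  | add z z' hz hz' => rw [map_add]; exact add_mem hz hz'

section Sweedler

variable {k H M : Type*} [CommSemiring k] [Semiring H] [HopfAlgebra k H]
  [AddCommMonoid M] [Module k M] [Module H M] [IsScalarTower k H M]

theorem actL_apply (x : M) (h : H) : actL k x h = h • x := rfl

/-- `commRHSOf φ K x h = Σ φ(h₁ • x) K(h₂)`. -/
noncomputable def commRHSOf {A : Type*} [Semiring A] [Algebra k A]
    (φ : M →ₗ[k] A) (K : H →ₗ[k] A) : M →ₗ[k] H →ₗ[k] A where
  toFun x := LinearMap.mul' k A ∘ₗ TensorProduct.map (φ ∘ₗ actL k x) K ∘ₗ comul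
  map_add' x y := by
    have : actL k (x + y) = actL k x + actL k y := LinearMap.ext fun h : H => smul_add h x y
    simp only [this, LinearMap.comp_add, TensorProduct.map_add_left, LinearMap.add_comp]
  map_smul' c x := by
    have : actL k (c • x) = c • actL k x := LinearMap.ext fun h : H => smul_comm h c x
    simp only [this, LinearMap.comp_smul, TensorProduct.map_smul_left, LinearMap.smul_comp,
      RingHom.id_apply]

variable {A B : Type*} [Semiring A] [Algebra k A] [Semiring B] [Algebra k B]

theorem commRHSOf_apply (φ : M →ₗ[k] A) (K : H →ₗ[k] A) (x : M) (h : H) :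
    commRHSOf φ K x h = LinearMap.mul' k A (TensorProduct.map (φ ∘ₗ actL k x) K (comul h)) :=
  rfl

theorem commRHS_eq_commRHSOf (f : H →ₗ[k] M) (x : M) :
    commRHS k f x = commRHSOf (TensorAlgebra.ι k) (TensorAlgebra.ι k ∘ₗ f) x :=
  rfl

theorem map_commRHSOf (F : A →ₐ[k] B) (φ : M →ₗ[k] A) (K : H →ₗ[k] A) (x : M) (h : H) :
    F (commRHSOf φ K x h) = commRHSOf (F.toLinearMap ∘ₗ φ) (F.toLinearMap ∘ₗ K) x h := by
  rw [commRHSOf_apply, commRHSOf_apply, LinearMap.comp_assoc, TensorProduct.map_comp,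
    LinearMap.comp_apply]
  exact congr($(AlgHom.comp_mul' F) _)

/-- `Σ (h₁ a S(h₂)) h₃ = h a`, using `Σ S(h₁) h₂ = ε(h)` after coassociativity. -/
theorem mul'_rTensor_adjL_comul (a h : H) :
    LinearMap.mul' k H ((adjL k a).rTensor H (comul h)) = h * a := by
  set G := LinearMap.mul' k H ∘ₗ
    TensorProduct.map (LinearMap.mulRight k a) (HopfAlgebra.antipode k)
  have reassoc : LinearMap.mul' k H ∘ₗ G.rTensor H ∘ₗ
      (TensorProduct.assoc k H H H).symm.toLinearMap =
      LinearMap.mul' k H ∘ₗ TensorProduct.map (LinearMap.mulRight k a)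
        (LinearMap.mul' k H ∘ₗ (HopfAlgebra.antipode k).rTensor H) := by
    apply TensorProduct.ext_threefold'
    intro x y z
    simp [G, mul_assoc]
  calc LinearMap.mul' k H ((adjL k a).rTensor H (comul h))
      = LinearMap.mul' k H (G.rTensor H ((TensorProduct.assoc k H H H).symm
          ((comul (R := k)).lTensor H (comul h)))) := by
        simp only [coassoc_symm_apply, adjL, G, LinearMap.rTensor_comp, LinearMap.comp_apply]
    _ = LinearMap.mul' k H (TensorProduct.map (LinearMap.mulRight k a)
          (Algebra.linearMap k H ∘ₗ counit) (comul h)) := by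
        rw [← HopfAlgebra.mul_antipode_rTensor_comul, ← LinearMap.comp_assoc,
          ← LinearMap.map_lTensor]
        exact congr($reassoc _)
    _ = h * a := by
        rw [← LinearMap.comp_id (LinearMap.mulRight k a), TensorProduct.map_comp,
          LinearMap.comp_apply, ← LinearMap.lTensor, lTensor_counit_comul]
        simp

end Sweedler

section Spanning

variable {k H M V : Type*} [CommSemiring k] [Semiring H] [HopfAlgebra k H]
  [AddCommMonoid M] [Module k M] [Module H M] [IsScalarTower k H M]
  [AddCommMonoid V] [Module k V] (f : H →ₗ[k] M) (s : V →ₗ[k] M)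

local notation "π" => RingQuot.mkAlgHom k (fulcrumRel k f)
local notation "Tₛ" => TensorAlgebra.lift k (ι k ∘ₗ s)

noncomputable def toFulcrum : TensorAlgebra k V ⊗[k] H →ₗ[k] RingQuot (fulcrumRel k f) :=
  LinearMap.mul' k (RingQuot (fulcrumRel k f)) ∘ₗ
    TensorProduct.map (AlgHom.toLinearMap π ∘ₗ AlgHom.toLinearMap Tₛ)
      (AlgHom.toLinearMap π ∘ₗ ι k ∘ₗ f)

theorem toFulcrum_tmul (t : TensorAlgebra k V) (h : H) :
    toFulcrum f s (t ⊗ₜ h) = π (Tₛ t) * π (ι k (f h)) :=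
  rfl

theorem mkAlgHom_ι_mul_ι (h h' : H) :
    π (ι k (f h)) * π (ι k (f h')) = π (ι k (f (h * h'))) := by
  rw [← map_mul]
  exact RingQuot.mkAlgHom_rel k (Or.inl ⟨h, h', rfl, rfl⟩)

theorem mkAlgHom_ι_one : π (ι k (f 1)) = 1 := by
  rw [← map_one π]
  exact RingQuot.mkAlgHom_rel k (Or.inr (Or.inl ⟨rfl, rfl⟩))

theorem mkAlgHom_ι_mul_ι_eq_commRHS (h : H) (x : M) :
    π (ι k (f h)) * π (ι k x) = π (commRHS k f x h) := by
  rw [← map_mul]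
  exact RingQuot.mkAlgHom_rel k (Or.inr (Or.inr ⟨h, x, rfl, rfl⟩))

theorem mkAlgHom_lift_mul_mem_range (t : TensorAlgebra k V) {r : RingQuot (fulcrumRel k f)}
    (hr : r ∈ LinearMap.range (toFulcrum f s)) :
    π (Tₛ t) * r ∈ LinearMap.range (toFulcrum f s) := by
  refine range_le_of_tmul_mem (p := (LinearMap.range (toFulcrum f s)).comap
    (LinearMap.mulLeft k (π (Tₛ t)))) _ (fun t' g => ⟨(t * t') ⊗ₜ g, ?_⟩) hr
  simp only [toFulcrum_tmul, LinearMap.mulLeft_apply, map_mul, mul_assoc]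

theorem mul_mkAlgHom_ι_mem_range (g : H) {r : RingQuot (fulcrumRel k f)}
    (hr : r ∈ LinearMap.range (toFulcrum f s)) :
    r * π (ι k (f g)) ∈ LinearMap.range (toFulcrum f s) := by
  refine range_le_of_tmul_mem (p := (LinearMap.range (toFulcrum f s)).comap
    (LinearMap.mulRight k (π (ι k (f g))))) _ (fun t g' => ⟨t ⊗ₜ (g' * g), ?_⟩) hr
  simp only [toFulcrum_tmul, LinearMap.mulRight_apply, mul_assoc, mkAlgHom_ι_mul_ι]

variable {f s} (hfs : LinearMap.range f ⊔ LinearMap.range s = ⊤)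
include hfs

theorem mkAlgHom_ι_mul_ι_mem_range (x : M) (g : H) :
    π (ι k x) * π (ι k (f g)) ∈ LinearMap.range (toFulcrum f s) := by
  obtain ⟨_, ⟨a, rfl⟩, _, ⟨v, rfl⟩, rfl⟩ :=
    Submodule.mem_sup.mp (hfs ▸ Submodule.mem_top (x := x))
  rw [map_add, map_add, add_mul, mkAlgHom_ι_mul_ι]
  exact add_mem ⟨1 ⊗ₜ (a * g), by simp [toFulcrum_tmul]⟩ ⟨ι k v ⊗ₜ g, by simp [toFulcrum_tmul]⟩

theorem mkAlgHom_ι_mul_lift_mem_range (h : H) (t : TensorAlgebra k V) :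
    π (ι k (f h)) * π (Tₛ t) ∈ LinearMap.range (toFulcrum f s) := by
  induction t using TensorAlgebra.induction generalizing h with
  | algebraMap c =>
    exact ⟨algebraMap k _ c ⊗ₜ h, by simp [toFulcrum_tmul, Algebra.commutes]⟩
  | ι v =>
    rw [TensorAlgebra.lift_ι_apply, LinearMap.comp_apply, mkAlgHom_ι_mul_ι_eq_commRHS,
      commRHS_eq_commRHSOf, commRHSOf_apply]
    refine range_le_of_tmul_mem
      (p := (LinearMap.range (toFulcrum f s)).comap (AlgHom.toLinearMap π))
      (LinearMap.mul' k _ ∘ₗ TensorProduct.map _ _) (fun a a' => ?_) ⟨comul h, rfl⟩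
    simpa [actL_apply] using mkAlgHom_ι_mul_ι_mem_range hfs (a • s v) a'
  | mul t t' ht ht' =>
    rw [map_mul, map_mul, ← mul_assoc]
    refine range_le_of_tmul_mem (p := (LinearMap.range (toFulcrum f s)).comap
      (LinearMap.mulRight k (π (Tₛ t')))) _ (fun u g => ?_) (ht h)
    simpa [toFulcrum_tmul, mul_assoc] using mkAlgHom_lift_mul_mem_range f s u (ht' g)
  | add t t' ht ht' =>
    rw [map_add, map_add, mul_add]
    exact add_mem (ht h) (ht' h)

theorem mul_mem_range {r r' : RingQuot (fulcrumRel k f)}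
    (hr : r ∈ LinearMap.range (toFulcrum f s)) (hr' : r' ∈ LinearMap.range (toFulcrum f s)) :
    r * r' ∈ LinearMap.range (toFulcrum f s) := by
  refine range_le_of_tmul_mem (p := (LinearMap.range (toFulcrum f s)).comap
    (LinearMap.mulLeft k r)) _ (fun t g => ?_) hr'
  refine range_le_of_tmul_mem (p := (LinearMap.range (toFulcrum f s)).comap
    (LinearMap.mulRight k (toFulcrum f s (t ⊗ₜ g)))) _ (fun u g' => ?_) hr
  simp only [Submodule.mem_comap, LinearMap.mulRight_apply, toFulcrum_tmul, ← mul_assoc]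
  refine mul_mkAlgHom_ι_mem_range f s g ?_
  rw [mul_assoc]
  exact mkAlgHom_lift_mul_mem_range f s u (mkAlgHom_ι_mul_lift_mem_range hfs g' t)

theorem surjective_toFulcrum : Function.Surjective (toFulcrum f s) := by
  rw [← LinearMap.range_eq_top, eq_top_iff]
  rintro _ -
  obtain ⟨u, rfl⟩ := RingQuot.mkAlgHom_surjective k (fulcrumRel k f) ‹_›
  induction u using TensorAlgebra.induction with
  | algebraMap c =>
    exact ⟨algebraMap k _ c ⊗ₜ 1, by simp [toFulcrum_tmul, mkAlgHom_ι_one]⟩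
  | ι x => simpa [mkAlgHom_ι_one] using mkAlgHom_ι_mul_ι_mem_range hfs x 1
  | mul u u' hu hu' => rw [map_mul]; exact mul_mem_range hfs hu hu'
  | add u u' hu hu' => rw [map_add]; exact add_mem hu hu'

end Spanning

section Words

variable {k H V X : Type*} [CommSemiring k] [Semiring H] [Algebra k H]
  [AddCommMonoid V] [Module k V]

/- `𝔼` models `T(V) ⊗ H` once a basis `X` of `V` is fixed: `single w g` stands for `w ⊗ g`. -/
local notation "𝔼" => MonoidAlgebra H (FreeMonoid X)

noncomputable def liftWords {N : Type*} [AddCommMonoid N] [Module k N] :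
    (FreeMonoid X → H →ₗ[k] N) →ₗ[k] 𝔼 →ₗ[k] N :=
  LinearMap.lcomp k N (MonoidAlgebra.coeffLinearEquiv k).toLinearMap ∘ₗ
    (Finsupp.lsum k).toLinearMap

@[simp]
theorem liftWords_single {N : Type*} [AddCommMonoid N] [Module k N]
    (F : FreeMonoid X → H →ₗ[k] N) (w : FreeMonoid X) (g : H) :
    liftWords F (single w g) = F w g := by
  simp [liftWords, MonoidAlgebra.coeffLinearEquiv]

variable (k H X) in
noncomputable def wordFiltration (n : ℕ) : Submodule k 𝔼 :=
  Submodule.span k (Set.image2 single {w : FreeMonoid X | w.length ≤ n} Set.univ)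

theorem single_mem_wordFiltration {n : ℕ} {w : FreeMonoid X} (hw : w.length ≤ n) (g : H) :
    single w g ∈ wordFiltration k H X n :=
  Submodule.subset_span (Set.mem_image2_of_mem hw trivial)

theorem wordFiltration_mono {m n : ℕ} (hmn : m ≤ n) :
    wordFiltration k H X m ≤ wordFiltration k H X n :=
  Submodule.span_mono (Set.image2_subset (fun _ hw => le_trans hw hmn) subset_rfl)

theorem wordFiltration_le_comap {N : Type*} [AddCommMonoid N] [Module k N] {n : ℕ}
    {F : 𝔼 →ₗ[k] N} {p : Submodule k N}
    (hF : ∀ w : FreeMonoid X, w.length ≤ n → ∀ g, F (single w g) ∈ p) :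
    wordFiltration k H X n ≤ p.comap F :=
  Submodule.span_le.mpr (by rintro _ ⟨w, hw, g, -, rfl⟩; exact hF w hw g)

theorem eqOn_wordFiltration {N : Type*} [AddCommMonoid N] [Module k N] {n : ℕ}
    {F G : 𝔼 →ₗ[k] N}
    (h : ∀ w : FreeMonoid X, w.length ≤ n → ∀ g, F (single w g) = G (single w g)) :
    Set.EqOn F G (wordFiltration k H X n) :=
  LinearMap.eqOn_span' (by rintro _ ⟨w, hw, g, -, rfl⟩; exact h w hw g)

noncomputable def embV (B : Module.Basis X k V) : V →ₗ[k] 𝔼 :=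
  B.constr k fun b => single (FreeMonoid.of b) 1

theorem embV_basis (B : Module.Basis X k V) (b : X) :
    embV (H := H) B (B b) = single (FreeMonoid.of b) 1 :=
  B.constr_basis k _ b

theorem embV_mul_single_mem (B : Module.Basis X k V) (v : V) (w : FreeMonoid X) (g : H) :
    embV B v * single w g ∈ wordFiltration k H X (w.length + 1) := by
  suffices ⊤ ≤ (wordFiltration k H X (w.length + 1)).comap
      (LinearMap.mulRight k (single w g) ∘ₗ embV B) from this Submodule.mem_top
  rw [← B.span_eq, Submodule.span_le]
  rintro _ ⟨b, rfl⟩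
  simp only [SetLike.mem_coe, Submodule.mem_comap, LinearMap.comp_apply, embV_basis,
    LinearMap.mulRight_apply, MonoidAlgebra.single_mul_single, one_mul]
  exact single_mem_wordFiltration (by simp [FreeMonoid.length_mul, add_comm]) g

theorem length_of_mul (b : X) (w : FreeMonoid X) :
    (FreeMonoid.of b * w).length = w.length + 1 :=
  rfl

def PreservesLength (K : H →ₗ[k] Module.End k 𝔼) : Prop :=
  ∀ (h : H) (w : FreeMonoid X) (g : H), K h (single w g) ∈ wordFiltration k H X w.length

theorem endo_ext_single {F G : Module.End k 𝔼} (h : ∀ w g, F (single w g) = G (single w g)) :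
    F = G :=
  MonoidAlgebra.lhom_ext' fun w => LinearMap.ext fun g => h w g

end Words

section Comparison

variable {k H V X : Type*} [CommSemiring k] [Semiring H] [Algebra k H]
  [AddCommMonoid V] [Module k V]

local notation "𝔼" => MonoidAlgebra H (FreeMonoid X)

noncomputable def toTensor (B : Module.Basis X k V) : 𝔼 →ₗ[k] TensorAlgebra k V ⊗[k] H :=
  liftWords fun w => TensorProduct.mk k _ H (FreeMonoid.lift (fun b => ι k (B b)) w)

theorem toTensor_single (B : Module.Basis X k V) (w : FreeMonoid X) (g : H) :
    toTensor B (single w g) = FreeMonoid.lift (fun b => ι k (B b)) w ⊗ₜ g :=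
  liftWords_single ..

theorem toTensor_comp_mulLeft (B : Module.Basis X k V) (t : TensorAlgebra k V) :
    toTensor B ∘ₗ LinearMap.mulLeft k (TensorAlgebra.lift k (embV (H := H) B) t) =
      (LinearMap.mulLeft k t).rTensor H ∘ₗ toTensor B := by
  induction t using TensorAlgebra.induction with
  | algebraMap c =>
    refine MonoidAlgebra.lhom_ext' fun w => LinearMap.ext fun g => ?_
    simp [toTensor_single, Algebra.algebraMap_eq_smul_one, TensorProduct.smul_tmul']
  | ι v =>
    refine MonoidAlgebra.lhom_ext' fun w => LinearMap.ext fun g => ?_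
    have key : toTensor B ∘ₗ LinearMap.mulRight k (single w g) ∘ₗ embV B =
        (TensorProduct.mk k _ H).flip g ∘ₗ
          LinearMap.mulRight k (FreeMonoid.lift (fun b => ι k (B b)) w) ∘ₗ ι k :=
      B.ext fun b => by simp [embV_basis, MonoidAlgebra.single_mul_single, toTensor_single]
    simpa [toTensor_single] using congr($key v)
  | mul t t' ht ht' =>
    rw [map_mul, LinearMap.mulLeft_mul, ← LinearMap.comp_assoc, ht, LinearMap.comp_assoc, ht',
      ← LinearMap.comp_assoc, ← LinearMap.rTensor_comp, ← LinearMap.mulLeft_mul]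
  | add t t' ht ht' =>
    refine LinearMap.ext fun y => ?_
    have h := congr($ht y)
    have h' := congr($ht' y)
    simp only [LinearMap.comp_apply, LinearMap.mulLeft_apply] at h h' ⊢
    have hadd : LinearMap.mulLeft k (t + t') = LinearMap.mulLeft k t + LinearMap.mulLeft k t' :=
      LinearMap.ext fun u => add_mul t t' u
    rw [map_add, add_mul, map_add, h, h', hadd, LinearMap.rTensor_add, LinearMap.add_apply]

end Comparison

section Model

variable {k H M V X : Type*} [CommSemiring k] [Semiring H] [HopfAlgebra k H]
  [AddCommMonoid M] [Module k M] [AddCommMonoid V] [Module k V]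

local notation "𝔼" => MonoidAlgebra H (FreeMonoid X)

variable (e : M ≃ₗ[k] H × V) (B : Module.Basis X k V) (s : V →ₗ[k] M)

noncomputable def actM (K : H →ₗ[k] Module.End k 𝔼) : M →ₗ[k] Module.End k 𝔼 :=
  (K ∘ₗ LinearMap.fst k H V + LinearMap.mul k 𝔼 ∘ₗ embV B ∘ₗ LinearMap.snd k H V) ∘ₗ
    e.toLinearMap

theorem actM_apply (K : H →ₗ[k] Module.End k 𝔼) (x : M) (y : 𝔼) :
    actM e B K x y = K (e x).1 y + embV B (e x).2 * y :=
  rfl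

theorem wordFiltration_le_comap_actM {e : M ≃ₗ[k] H × V} {B : Module.Basis X k V}
    {K : H →ₗ[k] Module.End k 𝔼} (hK : PreservesLength K) (x : M) (n : ℕ) :
    wordFiltration k H X n ≤ (wordFiltration k H X (n + 1)).comap (actM e B K x) :=
  wordFiltration_le_comap fun w hw g => by
    rw [actM_apply]
    exact add_mem (wordFiltration_mono (by omega) (hK _ w g))
      (wordFiltration_mono (by omega) (embV_mul_single_mem B _ w g))

theorem actM_f {e : M ≃ₗ[k] H × V} {f : H →ₗ[k] M} (hef : ∀ a, e (f a) = (a, 0))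
    {B : Module.Basis X k V} (K : H →ₗ[k] Module.End k 𝔼) (a : H) : actM e B K (f a) = K a := by
  ext y; simp [actM_apply, hef]

theorem actM_s {e : M ≃ₗ[k] H × V} {s : V →ₗ[k] M} (hes : ∀ v, e (s v) = (0, v))
    {B : Module.Basis X k V} (K : H →ₗ[k] Module.End k 𝔼) (v : V) :
    actM e B K (s v) = LinearMap.mul k 𝔼 (embV B v) := by
  ext y; simp [actM_apply, hes]

theorem f_fst_add_s_snd {e : M ≃ₗ[k] H × V} {f : H →ₗ[k] M} {s : V →ₗ[k] M}
    (hef : ∀ a, e (f a) = (a, 0)) (hes : ∀ v, e (s v) = (0, v)) (x : M) :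
    f (e x).1 + s (e x).2 = x :=
  e.injective (by simp [hef, hes])

variable [Module H M] [IsScalarTower k H M]

noncomputable def stepOnWord (K : H →ₗ[k] Module.End k 𝔼) (w : FreeMonoid X) :
    H →ₗ[k] H →ₗ[k] 𝔼 :=
  FreeMonoid.casesOn w ((LinearMap.mul k H).compr₂ (lsingle 1)) fun b w' =>
    LinearMap.lcomp k 𝔼 (lsingle w') ∘ₗ commRHSOf (actM e B K) K (s (B b))

noncomputable def step (K : H →ₗ[k] Module.End k 𝔼) : H →ₗ[k] Module.End k 𝔼 :=
  liftWords ∘ₗ LinearMap.pi (stepOnWord e B s K)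

theorem step_single_one (K : H →ₗ[k] Module.End k 𝔼) (h g : H) :
    step e B s K h (single 1 g) = single 1 (h * g) := by
  simp [step, stepOnWord]

theorem step_single_cons (K : H →ₗ[k] Module.End k 𝔼) (h g : H) (b : X) (w : FreeMonoid X) :
    step e B s K h (single (FreeMonoid.of b * w) g) =
      commRHSOf (actM e B K) K (s (B b)) h (single w g) := by
  simp [step, stepOnWord]

/- The intended recursion `actH h (b w ⊗ g) = Σ actM(h₁ • s b) (actH h₂ (w ⊗ g))` uses `actH` on
all of `wordFiltration |w|`, not only on `w`. So `actH` reads off the `|w|`-th iterate of `step`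
on `w`, and these iterates stabilise (`approx_single_of_le`). -/
noncomputable def approx : ℕ → H →ₗ[k] Module.End k 𝔼
  | 0 => step e B s 0
  | n + 1 => step e B s (approx n)

noncomputable def actH : H →ₗ[k] Module.End k 𝔼 :=
  liftWords ∘ₗ LinearMap.pi fun w => LinearMap.lcomp k 𝔼 (lsingle w) ∘ₗ approx e B s w.length

theorem actH_single (h g : H) (w : FreeMonoid X) :
    actH e B s h (single w g) = approx e B s w.length h (single w g) := by
  simp [actH]

variable {e B s}

theorem commRHSOf_actM_single_mem {K : H →ₗ[k] Module.End k 𝔼} (hK : PreservesLength K)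
    (x : M) (h g : H) (w : FreeMonoid X) :
    commRHSOf (actM e B K) K x h (single w g) ∈ wordFiltration k H X (w.length + 1) := by
  rw [commRHSOf_apply]
  induction comul (R := k) h using TensorProduct.induction_on with
  | zero => simp
  | tmul a a' =>
    simpa [actL_apply] using wordFiltration_le_comap_actM hK (a • x) w.length (hK a' w g)
  | add z z' hz hz' => simpa only [map_add, LinearMap.add_apply] using add_mem hz hz'

theorem step_preservesLength {K : H →ₗ[k] Module.End k 𝔼} (hK : PreservesLength K) :
    PreservesLength (step e B s K) := by
  intro h w g
  cases w with
  | one => rw [step_single_one]; exact single_mem_wordFiltration le_rfl _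
  | of_mul b w => rw [step_single_cons]; exact commRHSOf_actM_single_mem hK _ h g w

theorem approx_preservesLength : ∀ n, PreservesLength (approx e B s n)
  | 0 => step_preservesLength fun _ _ _ => zero_mem _
  | n + 1 => step_preservesLength (approx_preservesLength n)

theorem commRHSOf_actM_congr {K₁ K₂ : H →ₗ[k] Module.End k 𝔼} {n : ℕ}
    (hK : ∀ (h : H) (w : FreeMonoid X) (g : H), w.length ≤ n →
      K₁ h (single w g) = K₂ h (single w g))
    (hK₂ : PreservesLength K₂) (x : M) (h g : H) {w : FreeMonoid X} (hw : w.length ≤ n) :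
    commRHSOf (actM e B K₁) K₁ x h (single w g) =
      commRHSOf (actM e B K₂) K₂ x h (single w g) := by
  simp only [commRHSOf_apply]
  induction comul (R := k) h using TensorProduct.induction_on with
  | zero => simp
  | tmul a a' =>
    simp only [TensorProduct.map_tmul, LinearMap.mul'_apply, Module.End.mul_apply,
      LinearMap.comp_apply, hK a' w g hw]
    refine eqOn_wordFiltration (fun u hu g' => ?_) (wordFiltration_mono hw (hK₂ a' w g))
    rw [actM_apply, actM_apply, hK _ u g' hu]
  | add z z' hz hz' => simp only [map_add, LinearMap.add_apply, hz, hz']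

theorem approx_single_one (n : ℕ) (h g : H) :
    approx e B s n h (single 1 g) = single 1 (h * g) := by
  cases n <;> exact step_single_one ..

theorem approx_succ_single {n : ℕ} {w : FreeMonoid X} (hw : w.length ≤ n) (h g : H) :
    approx e B s (n + 1) h (single w g) = approx e B s n h (single w g) := by
  induction n generalizing w h g with
  | zero =>
    obtain rfl : w = 1 := FreeMonoid.length_eq_zero.mp (Nat.le_zero.mp hw)
    simp only [approx_single_one]
  | succ n ih =>
    cases w with
    | one => simp only [approx_single_one]
    | of_mul b w =>
      simp only [approx, step_single_cons]
      exact commRHSOf_actM_congr (fun h u g hu => ih hu h g) (approx_preservesLength n) _ h g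
        (by rw [length_of_mul] at hw; omega)

theorem approx_single_of_le {m n : ℕ} (hmn : m ≤ n) {w : FreeMonoid X} (hw : w.length ≤ m)
    (h g : H) : approx e B s n h (single w g) = approx e B s m h (single w g) := by
  induction n, hmn using Nat.le_induction with
  | base => rfl
  | succ n hmn ih => rw [approx_succ_single (hw.trans hmn), ih]

theorem actH_single_one (h g : H) : actH e B s h (single 1 g) = single 1 (h * g) := by
  rw [actH_single, approx_single_one]

theorem actH_preservesLength : PreservesLength (actH e B s) := fun h w g => by
  rw [actH_single]; exact approx_preservesLength _ h w g

theorem actH_single_cons (h g : H) (b : X) (w : FreeMonoid X) :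
    actH e B s h (single (FreeMonoid.of b * w) g) =
      commRHSOf (actM e B (actH e B s)) (actH e B s) (s (B b)) h (single w g) := by
  rw [actH_single, length_of_mul, approx, step_single_cons]
  refine commRHSOf_actM_congr (fun h u g hu => ?_) actH_preservesLength _ h g le_rfl
  rw [actH_single, approx_single_of_le hu le_rfl]

theorem actH_mem_wordFiltration (h : H) {n : ℕ} {y : 𝔼} (hy : y ∈ wordFiltration k H X n) :
    actH e B s h y ∈ wordFiltration k H X n :=
  wordFiltration_le_comap (fun w hw g => wordFiltration_mono hw (actH_preservesLength h w g)) hy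

variable {f : H →ₗ[k] M} (hadj : ∀ h a : H, h • f a = f (adjL k a h))
  (hef : ∀ a, e (f a) = (a, 0)) (hes : ∀ v, e (s v) = (0, v))

include hes in
theorem actH_one : actH e B s 1 = 1 := by
  refine endo_ext_single fun w g => ?_
  induction w using FreeMonoid.inductionOn' generalizing g with
  | one => rw [actH_single_one, one_mul]; rfl
  | of_mul b w ih =>
    rw [actH_single_cons, commRHSOf_apply, Bialgebra.comul_one, Algebra.TensorProduct.one_def]
    simp [actL_apply, ih, actM_s hes, embV_basis, MonoidAlgebra.single_mul_single]

theorem actH_mul_embV (h : H) (v : V) (y : 𝔼) :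
    actH e B s h (embV B v * y) = commRHSOf (actM e B (actH e B s)) (actH e B s) (s v) h y := by
  have key : LinearMap.mulLeft k (actH e B s h) ∘ₗ LinearMap.mul k 𝔼 ∘ₗ embV B =
      (commRHSOf (actM e B (actH e B s)) (actH e B s)).flip h ∘ₗ s := by
    refine B.ext fun b => endo_ext_single fun w g => ?_
    simp [embV_basis, MonoidAlgebra.single_mul_single, actH_single_cons]
  exact congr($key v y)

include hadj hef in
theorem commRHSOf_f_apply {y : 𝔼}
    (hy : ∀ h h' : H, actH e B s h (actH e B s h' y) = actH e B s (h * h') y) (a h : H) :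
    commRHSOf (actM e B (actH e B s)) (actH e B s) (f a) h y = actH e B s (h * a) y := by
  rw [commRHSOf_apply, ← mul'_rTensor_adjL_comul (k := k) a h]
  induction comul (R := k) h using TensorProduct.induction_on with
  | zero => simp
  | tmul c c' => simp [actL_apply, hadj, actM_f hef, hy]
  | add z z' hz hz' => simp only [map_add, LinearMap.add_apply, hz, hz']

include hadj hef hes in
theorem actH_actM_apply {y : 𝔼}
    (hy : ∀ h h' : H, actH e B s h (actH e B s h' y) = actH e B s (h * h') y) (x : M) (h : H) :
    actH e B s h (actM e B (actH e B s) x y) =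
      commRHSOf (actM e B (actH e B s)) (actH e B s) x h y := by
  conv_lhs => rw [← f_fst_add_s_snd hef hes x]
  rw [map_add, LinearMap.add_apply, actM_f hef, actM_s hes, map_add, LinearMap.mul_apply',
    actH_mul_embV, hy, ← commRHSOf_f_apply hadj hef hy, ← LinearMap.add_apply,
    ← LinearMap.add_apply, ← map_add, f_fst_add_s_snd hef hes]

include hadj hef hes in
theorem actH_commRHSOf_apply {n : ℕ}
    (hmul : ∀ y ∈ wordFiltration k H X n, ∀ h h' : H,
      actH e B s h (actH e B s h' y) = actH e B s (h * h') y)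
    (x : M) (h h' : H) {y : 𝔼} (hy : y ∈ wordFiltration k H X n) :
    actH e B s h (commRHSOf (actM e B (actH e B s)) (actH e B s) x h' y) =
      commRHSOf (actM e B (actH e B s)) (actH e B s) x (h * h') y := by
  rw [commRHSOf_apply, commRHSOf_apply, Bialgebra.comul_mul]
  induction comul (R := k) h' using TensorProduct.induction_on with
  | zero => simp
  | tmul a a' =>
    simp only [TensorProduct.map_tmul, LinearMap.mul'_apply, Module.End.mul_apply,
      LinearMap.comp_apply]
    rw [actH_actM_apply hadj hef hes (hmul _ (actH_mem_wordFiltration a' hy)), commRHSOf_apply]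
    induction comul (R := k) h using TensorProduct.induction_on with
    | zero => simp
    | tmul c c' =>
      simp [Algebra.TensorProduct.tmul_mul_tmul, actL_apply, mul_smul, hmul y hy]
    | add z z' hz hz' => simp only [add_mul, map_add, LinearMap.add_apply, hz, hz']
  | add z z' hz hz' => simp only [mul_add, map_add, LinearMap.add_apply, hz, hz']

include hadj hef hes in
theorem actH_actH_single (n : ℕ) {w : FreeMonoid X} (hw : w.length ≤ n) (h h' g : H) :
    actH e B s h (actH e B s h' (single w g)) = actH e B s (h * h') (single w g) := by
  induction n generalizing w h h' g with
  | zero =>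
    obtain rfl : w = 1 := FreeMonoid.length_eq_zero.mp (Nat.le_zero.mp hw)
    simp only [actH_single_one, mul_assoc]
  | succ n ih =>
    cases w with
    | one => simp only [actH_single_one, mul_assoc]
    | of_mul b w =>
      rw [actH_single_cons, actH_single_cons]
      refine actH_commRHSOf_apply hadj hef hes (n := n) (fun y hy h h' => ?_) _ h h'
        (single_mem_wordFiltration (Nat.le_of_succ_le_succ hw) g)
      exact eqOn_wordFiltration (F := actH e B s h ∘ₗ actH e B s h') (G := actH e B s (h * h'))
        (fun u hu g => ih hu h h' g) hy

include hadj hef hes in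
theorem actH_mul (h h' : H) : actH e B s h * actH e B s h' = actH e B s (h * h') :=
  endo_ext_single fun w g => actH_actH_single hadj hef hes w.length le_rfl h h' g

include hadj hef hes in
theorem actH_mul_actM (h : H) (x : M) :
    actH e B s h * actM e B (actH e B s) x =
      commRHSOf (actM e B (actH e B s)) (actH e B s) x h :=
  LinearMap.ext fun y => by
    rw [Module.End.mul_apply]
    exact actH_actM_apply hadj hef hes
      (fun h h' => by rw [← Module.End.mul_apply, actH_mul hadj hef hes]) x h

include hadj hef hes in
theorem lift_actM_eq_of_fulcrumRel {u v : TensorAlgebra k M} (huv : fulcrumRel k f u v) :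
    TensorAlgebra.lift k (actM e B (actH e B s)) u =
      TensorAlgebra.lift k (actM e B (actH e B s)) v := by
  rcases huv with ⟨h, h', rfl, rfl⟩ | ⟨rfl, rfl⟩ | ⟨h, x, rfl, rfl⟩
  · simp [actM_f hef, actH_mul hadj hef hes]
  · simp [actM_f hef, actH_one hes]
  · have hf : (TensorAlgebra.lift k (actM e B (actH e B s))).toLinearMap ∘ₗ ι k ∘ₗ f =
        actH e B s :=
      LinearMap.ext fun a => by simp [actM_f hef]
    rw [map_mul, TensorAlgebra.lift_ι_apply, TensorAlgebra.lift_ι_apply, actM_f hef,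
      actH_mul_actM hadj hef hes, commRHS_eq_commRHSOf, map_commRHSOf, hf,
      TensorAlgebra.ι_comp_lift]

end Model

section Injectivity

variable {k H M V : Type*} [CommSemiring k] [Semiring H] [HopfAlgebra k H]
  [AddCommMonoid M] [Module k M] [Module H M] [IsScalarTower k H M]
  [AddCommMonoid V] [Module k V] [Module.Free k V] {f : H →ₗ[k] M} {s : V →ₗ[k] M}

theorem injective_toFulcrum (hadj : ∀ h a : H, h • f a = f (adjL k a h))
    {e : M ≃ₗ[k] H × V} (hef : ∀ a, e (f a) = (a, 0)) (hes : ∀ v, e (s v) = (0, v)) :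
    Function.Injective (toFulcrum f s) := by
  set B := Module.Free.chooseBasis k V
  set θ := RingQuot.liftAlgHom k (s := fulcrumRel k f)
    ⟨TensorAlgebra.lift k (actM e B (actH e B s)),
      fun _ _ => lift_actM_eq_of_fulcrumRel hadj hef hes⟩
  have hθs : (TensorAlgebra.lift k (actM e B (actH e B s))).comp
        (TensorAlgebra.lift k (ι k ∘ₗ s)) =
      (Algebra.lmul k _).comp (TensorAlgebra.lift k (embV B)) :=
    TensorAlgebra.hom_ext (LinearMap.ext fun v => by simp [actM_s hes])
  refine Function.LeftInverse.injective
    (g := toTensor B ∘ₗ LinearMap.applyₗ (single 1 1) ∘ₗ θ.toLinearMap) fun z => ?_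
  induction z using TensorProduct.induction_on with
  | zero => simp
  | tmul t h =>
    have hθ := congr($hθs t)
    have hT := LinearMap.congr_fun (toTensor_comp_mulLeft B t) (single 1 h)
    simp only [AlgHom.comp_apply, Algebra.coe_lmul_eq_mul] at hθ
    simp only [LinearMap.comp_apply, LinearMap.mulLeft_apply, toTensor_single, map_one,
      LinearMap.rTensor_tmul, mul_one] at hT
    simp [toFulcrum_tmul, θ, actM_f hef, actH_single_one, hθ, hT]
  | add z z' hz hz' => simp_all

end Injectivity

end Fulcrum

theorem fulcrum_tensor_decomposition_general
    {k H M V : Type*} [Field k] [Ring H] [HopfAlgebra k H]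
    [AddCommGroup M] [Module k M] [Module H M] [IsScalarTower k H M]
    [AddCommGroup V] [Module k V]
    (f : H →ₗ[k] M) (s : V →ₗ[k] M)
    (hf : Function.Injective f) (hs : Function.Injective s)
    (hadj : ∀ h a : H, h • f a = f (adjL k a h))
    (hcompl : IsCompl (LinearMap.range f) (LinearMap.range s)) :
    Function.Bijective (LinearMap.mul' k (RingQuot (fulcrumRel k f)) ∘ₗ
      TensorProduct.map
        ((RingQuot.mkAlgHom k (fulcrumRel k f)).toLinearMap ∘ₗ
          (TensorAlgebra.lift k ((TensorAlgebra.ι k (M := M)) ∘ₗ s)).toLinearMap)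
        ((RingQuot.mkAlgHom k (fulcrumRel k f)).toLinearMap ∘ₗ
          (TensorAlgebra.ι k (M := M)) ∘ₗ f)) := by
  obtain ⟨e, hef, hes⟩ := Fulcrum.exists_linearEquiv_prod_of_isCompl hf hs hcompl
  exact ⟨Fulcrum.injective_toFulcrum hadj hef hes,
    Fulcrum.surjective_toFulcrum hcompl.sup_eq_top⟩

/-- Under the fulcrum hypotheses, the `k`-linear map
`T(V) ⊗ₖ H → T(V)#_M H`, `a ⊗ h ↦ π(T(s)(a)) · π(ι(f(h)))`, is bijective. -/
theorem fulcrum_tensor_decomposition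
    {k H M V : Type*} [Field k] [Ring H] [HopfAlgebra k H]
    [AddCommGroup M] [Module k M] [Module H M] [IsScalarTower k H M]
    [AddCommGroup V] [Module k V]
    (f : H →ₗ[k] M) (s : V →ₗ[k] M)
    (hf : Function.Injective f) (hs : Function.Injective s)
    (hS : Function.Bijective (HopfAlgebra.antipode (R := k) (A := H)))
    (hadj : ∀ h a : H, h • f a = f (adjL k a h))
    (hcompl : IsCompl (LinearMap.range f) (LinearMap.range s)) :
    Function.Bijective (LinearMap.mul' k (RingQuot (fulcrumRel k f)) ∘ₗ
      TensorProduct.map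
        ((RingQuot.mkAlgHom k (fulcrumRel k f)).toLinearMap ∘ₗ
          (TensorAlgebra.lift k ((TensorAlgebra.ι k (M := M)) ∘ₗ s)).toLinearMap)
        ((RingQuot.mkAlgHom k (fulcrumRel k f)).toLinearMap ∘ₗ
          (TensorAlgebra.ι k (M := M)) ∘ₗ f)) :=
  fulcrum_tensor_decomposition_general f s hf hs hadj hcompl
end

section
/- Under the fulcrum hypotheses, the algebra homomorphism T(V) → T(V)#_M H determined by v ↦ π(ι(s(v))) is injective, and the map H → T(V)#_M H, h ↦ π(ι(f(h))), is an injective algebra homomorphism; thus T(V) and H embed as subalgebras of T(V)#_M H. -/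
open TensorProduct

/-!
Choose projections `p : M → H` and `q : M → V` along `M = f(H) ⊕ s(V)`. Then `x ∈ M` acts on
`T(V) ⊗ H` from the right by `t ⊗ b ↦ Σ (t ⊗ 1) (ι(q(b₁ • x)) ⊗ 1 + 1 ⊗ p(b₁ • x)) (1 ⊗ b₂)`.
By the Hopf identity `Σ h₁ a S(h₂) h₃ = h a`, `f(a)` acts as right multiplication by `1 ⊗ a`;
together with the multiplicativity of `Δ` this shows that the action respects the fulcrum
relations, so `T(V)#_M H` acts on `T(V) ⊗ H`. Acting on `1 ⊗ 1`, the image of `t ∈ T(V)` gives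
`t ⊗ 1` and the image of `a ∈ H` gives `1 ⊗ a`, so both maps are injective.
-/

theorem LinearMap.exists_leftInverse_of_isCompl_range {R N P M : Type*} [Ring R]
    [AddCommGroup N] [Module R N] [AddCommGroup P] [Module R P] [AddCommGroup M] [Module R M]
    {f : N →ₗ[R] M} {g : P →ₗ[R] M} (hf : Function.Injective f)
    (h : IsCompl (LinearMap.range f) (LinearMap.range g)) :
    ∃ π : M →ₗ[R] N, (∀ a, π (f a) = a) ∧ ∀ b, π (g b) = 0 := by
  refine ⟨(LinearEquiv.ofInjective f hf).symm.toLinearMap ∘ₗ Submodule.projectionOnto _ _ h,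
    fun a => ?_, fun b => ?_⟩
  · rw [LinearMap.comp_apply, Submodule.projectionOnto_apply_of_mem_left h ⟨a, rfl⟩,
      LinearEquiv.coe_coe, LinearEquiv.symm_apply_eq]
    rfl
  · simp [Submodule.projectionOnto_apply_of_mem_right h ⟨b, rfl⟩]

section Hopf

open Coalgebra HopfAlgebra

variable {k H : Type*} [CommSemiring k] [Semiring H] [HopfAlgebra k H]

theorem adjL_repr (a : H) {c : H} {ι : Type*} (r : Repr k c ι) :
    adjL k a c = ∑ i ∈ r.index, r.left i * a * antipode k (r.right i) := by
  simp [adjL, ← r.eq]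

theorem sum_adjL_mul (a : H) {b : H} {ι : Type*} (r : Repr k b ι) :
    ∑ i ∈ r.index, adjL k a (r.left i) * r.right i = b * a := by
  let Φ : H ⊗[k] (H ⊗[k] H) →ₗ[k] H := LinearMap.mul' k H ∘ₗ
    map (LinearMap.mulRight k a) (LinearMap.mul' k H ∘ₗ map (antipode k) LinearMap.id)
  have coassoc := congrArg Φ (sum_tmul_tmul_eq r (fun i ↦ ℛ k (r.left i)) (fun i ↦ ℛ k (r.right i)))
  simp only [map_sum, Φ, LinearMap.comp_apply, map_tmul, LinearMap.mul'_apply,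
    LinearMap.mulRight_apply, LinearMap.id_apply] at coassoc
  calc ∑ i ∈ r.index, adjL k a (r.left i) * r.right i
      = ∑ i ∈ r.index, ∑ j ∈ (ℛ k (r.left i)).index, (ℛ k (r.left i)).left j * a *
          (antipode k ((ℛ k (r.left i)).right j) * r.right i) := by
        simp only [adjL_repr a (ℛ k _), Finset.sum_mul, mul_assoc]
    _ = ∑ i ∈ r.index, r.left i * a * (counit (R := k) (r.right i) • 1) := by
        simp only [coassoc, ← Finset.mul_sum, sum_antipode_mul_eq_smul]
    _ = b * a := by
        have counit_right := congrArg (TensorProduct.rid k H) (sum_tmul_counit_eq (R := k) r)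
        simp only [map_sum, rid_tmul, one_smul] at counit_right
        simp [← counit_right, Finset.sum_mul]

end Hopf

section Representation

open Coalgebra Algebra.TensorProduct

variable {k H M V : Type*} [CommSemiring k] [Semiring H] [HopfAlgebra k H]
  [AddCommMonoid M] [Module k M] [AddCommMonoid V] [Module k V] (p : M →ₗ[k] H) (q : M →ₗ[k] V)

noncomputable def fulcrumGen : M →ₗ[k] TensorAlgebra k V ⊗[k] H :=
  (includeLeft (S := k)).toLinearMap ∘ₗ TensorAlgebra.ι k ∘ₗ q + includeRight.toLinearMap ∘ₗ p

theorem fulcrumGen_apply (y : M) :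
    fulcrumGen p q y = TensorAlgebra.ι k (q y) ⊗ₜ[k] (1 : H) + (1 : TensorAlgebra k V) ⊗ₜ[k] p y :=
  rfl

variable [Module H M] [IsScalarTower k H M]

theorem actL_apply (x : M) (h : H) : actL k x h = h • x := rfl

theorem actL_add (x y : M) : actL k (H := H) (x + y) = actL k x + actL k y := by
  ext h; exact smul_add h x y

theorem actL_smul (c : k) (x : M) : actL k (H := H) (c • x) = c • actL k x := by
  ext h; exact smul_comm h c x

noncomputable def fulcrumCoeff (x : M) : H →ₗ[k] TensorAlgebra k V ⊗[k] H :=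
  LinearMap.mul' k _ ∘ₗ map (fulcrumGen p q ∘ₗ actL k x) includeRight.toLinearMap ∘ₗ comul

theorem fulcrumCoeff_repr (x : M) {b : H} {ι : Type*} (r : Repr k b ι) :
    fulcrumCoeff p q x b =
      ∑ i ∈ r.index, fulcrumGen p q (r.left i • x) * (1 ⊗ₜ[k] r.right i) := by
  simp [fulcrumCoeff, actL_apply, ← r.eq]

theorem fulcrumCoeff_add (x y : M) :
    fulcrumCoeff p q (x + y) = fulcrumCoeff p q x + fulcrumCoeff p q y := by
  rw [fulcrumCoeff, actL_add, LinearMap.comp_add, map_add_left, LinearMap.add_comp,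
    LinearMap.comp_add]
  rfl

theorem fulcrumCoeff_smul (c : k) (x : M) :
    fulcrumCoeff p q (c • x) = c • fulcrumCoeff p q x := by
  rw [fulcrumCoeff, actL_smul, LinearMap.comp_smul, map_smul_left, LinearMap.smul_comp,
    LinearMap.comp_smul]
  rfl

noncomputable def fulcrumEnd : M →ₗ[k] Module.End k (TensorAlgebra k V ⊗[k] H) where
  toFun x := LinearMap.mul' k _ ∘ₗ map (includeLeft (S := k)).toLinearMap (fulcrumCoeff p q x)
  map_add' x y := by rw [fulcrumCoeff_add, map_add_right, LinearMap.comp_add]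
  map_smul' c x := by rw [fulcrumCoeff_smul, map_smul_right, LinearMap.comp_smul]; rfl

theorem fulcrumEnd_tmul (x : M) (t : TensorAlgebra k V) (b : H) :
    fulcrumEnd p q x (t ⊗ₜ[k] b) = (t ⊗ₜ[k] (1 : H)) * fulcrumCoeff p q x b := by
  simp [fulcrumEnd]

theorem fulcrumEnd_tmul_one (y : M) (t : TensorAlgebra k V) :
    fulcrumEnd p q y (t ⊗ₜ[k] (1 : H)) = (t ⊗ₜ[k] (1 : H)) * fulcrumGen p q y := by
  simp only [fulcrumEnd_tmul, fulcrumCoeff, LinearMap.comp_apply]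
  rw [Bialgebra.comul_one, one_def, TensorProduct.map_tmul]
  simp [actL_apply, ← one_def]

theorem fulcrumCoeff_mul (x : M) (b : H) {h : H} {ι : Type*} (r : Repr k h ι) :
    fulcrumCoeff p q x (b * h) =
      ∑ i ∈ r.index, fulcrumCoeff p q (r.left i • x) b * (1 ⊗ₜ[k] r.right i) := by
  have comul_mul : comul (R := k) (b * h) = ∑ i ∈ r.index, ∑ j ∈ (ℛ k b).index,
      ((ℛ k b).left j * r.left i) ⊗ₜ[k] ((ℛ k b).right j * r.right i) := by
    rw [Bialgebra.comul_mul, ← (ℛ k b).eq, ← r.eq, Finset.sum_mul_sum, Finset.sum_comm]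
    simp
  simp only [fulcrumCoeff_repr p q _ (ℛ k b), Finset.sum_mul]
  rw [fulcrumCoeff, LinearMap.comp_apply, LinearMap.comp_apply, comul_mul]
  simp [actL_apply, mul_smul, mul_assoc]

theorem fulcrumCoeff_f (f : H →ₗ[k] M) (hadj : ∀ h a : H, h • f a = f (adjL k a h))
    (hpf : ∀ a, p (f a) = a) (hqf : ∀ a, q (f a) = 0) (a b : H) :
    fulcrumCoeff p q (f a) b = (1 : TensorAlgebra k V) ⊗ₜ[k] (b * a) := by
  simp only [fulcrumCoeff_repr p q _ (ℛ k b), fulcrumGen_apply, hadj, hpf, hqf, map_zero,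
    zero_tmul, zero_add, tmul_mul_tmul, one_mul, ← tmul_sum, sum_adjL_mul]

theorem fulcrumEnd_f (f : H →ₗ[k] M) (hadj : ∀ h a : H, h • f a = f (adjL k a h))
    (hpf : ∀ a, p (f a) = a) (hqf : ∀ a, q (f a) = 0) (a : H) :
    fulcrumEnd p q (f a) = LinearMap.mulRight k ((1 : TensorAlgebra k V) ⊗ₜ[k] a) := by
  ext t b
  simp [fulcrumEnd_tmul, fulcrumCoeff_f p q f hadj hpf hqf]

theorem fulcrumEnd_mul_mulRight (x : M) {h : H} {ι : Type*} (r : Repr k h ι) :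
    fulcrumEnd p q x * LinearMap.mulRight k ((1 : TensorAlgebra k V) ⊗ₜ[k] h) =
      ∑ i ∈ r.index, LinearMap.mulRight k ((1 : TensorAlgebra k V) ⊗ₜ[k] r.right i) *
        fulcrumEnd p q (r.left i • x) := by
  ext t b
  simp [fulcrumEnd_tmul, fulcrumCoeff_mul p q x b r, Finset.mul_sum, mul_assoc]

noncomputable def fulcrumRep :
    TensorAlgebra k M →ₐ[k] (Module.End k (TensorAlgebra k V ⊗[k] H))ᵐᵒᵖ :=
  TensorAlgebra.lift k ((MulOpposite.opLinearEquiv k).toLinearMap ∘ₗ fulcrumEnd p q)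

theorem fulcrumRep_ι (x : M) :
    fulcrumRep p q (TensorAlgebra.ι k x) = MulOpposite.op (fulcrumEnd p q x) := by
  simp [fulcrumRep]

theorem fulcrumRep_rel (f : H →ₗ[k] M) (hadj : ∀ h a : H, h • f a = f (adjL k a h))
    (hpf : ∀ a, p (f a) = a) (hqf : ∀ a, q (f a) = 0) ⦃u v : TensorAlgebra k M⦄
    (huv : fulcrumRel k f u v) : fulcrumRep p q (V := V) u = fulcrumRep p q v := by
  have f_acts := fulcrumEnd_f (V := V) p q f hadj hpf hqf
  rcases huv with ⟨h, h', rfl, rfl⟩ | ⟨rfl, rfl⟩ | ⟨h, x, rfl, rfl⟩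
  · simp only [map_mul, fulcrumRep_ι, f_acts, ← MulOpposite.op_mul, Module.End.mul_eq_comp,
      ← LinearMap.mulRight_mul, tmul_mul_tmul, one_mul]
  · rw [fulcrumRep_ι, f_acts, ← one_def, LinearMap.mulRight_one, map_one]
    rfl
  · have commRHS_repr : commRHS k f x h = ∑ i ∈ (ℛ k h).index,
        TensorAlgebra.ι k ((ℛ k h).left i • x) * TensorAlgebra.ι k (f ((ℛ k h).right i)) := by
      simp [commRHS, actL_apply, ← (ℛ k h).eq]
    simp only [commRHS_repr, map_sum, map_mul, fulcrumRep_ι, f_acts, ← MulOpposite.op_mul,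
      ← Finset.op_sum, fulcrumEnd_mul_mulRight p q x (ℛ k h)]

theorem fulcrumRep_lift_apply_tmul_one (s : V →ₗ[k] M) (hqs : ∀ v, q (s v) = v)
    (hps : ∀ v, p (s v) = 0)
    (t t' : TensorAlgebra k V) :
    (fulcrumRep p q (TensorAlgebra.lift k (TensorAlgebra.ι k ∘ₗ s) t)).unop (t' ⊗ₜ[k] (1 : H)) =
      (t' * t) ⊗ₜ[k] 1 := by
  induction t using TensorAlgebra.induction generalizing t' with
  | algebraMap c =>
    simp [Algebra.smul_def, Algebra.commutes]
  | ι v =>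
    simp [fulcrumRep_ι, fulcrumEnd_tmul_one, fulcrumGen_apply, hqs, hps]
  | mul t₁ t₂ ih₁ ih₂ =>
    simp [ih₁, ih₂, mul_assoc]
  | add t₁ t₂ ih₁ ih₂ =>
    simp [ih₁, ih₂, mul_add, add_tmul]

end Representation

theorem fulcrum_subalgebras_general
    {k H M V : Type*} [Field k] [Ring H] [HopfAlgebra k H]
    [AddCommGroup M] [Module k M] [Module H M] [IsScalarTower k H M]
    [AddCommGroup V] [Module k V]
    (f : H →ₗ[k] M) (s : V →ₗ[k] M)
    (hf : Function.Injective f) (hs : Function.Injective s)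
    (hadj : ∀ h a : H, h • f a = f (adjL k a h))
    (hcompl : IsCompl (LinearMap.range f) (LinearMap.range s)) :
    Function.Injective
      (TensorAlgebra.lift k
        ((RingQuot.mkAlgHom k (fulcrumRel k f)).toLinearMap ∘ₗ
          (TensorAlgebra.ι k (M := M)) ∘ₗ s)) ∧
    Function.Injective
      ((RingQuot.mkAlgHom k (fulcrumRel k f)).toLinearMap ∘ₗ
        (TensorAlgebra.ι k (M := M)) ∘ₗ f) ∧
    (∀ h h' : H,
      ((RingQuot.mkAlgHom k (fulcrumRel k f)).toLinearMap ∘ₗ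
        (TensorAlgebra.ι k (M := M)) ∘ₗ f) (h * h') =
      ((RingQuot.mkAlgHom k (fulcrumRel k f)).toLinearMap ∘ₗ
        (TensorAlgebra.ι k (M := M)) ∘ₗ f) h *
      ((RingQuot.mkAlgHom k (fulcrumRel k f)).toLinearMap ∘ₗ
        (TensorAlgebra.ι k (M := M)) ∘ₗ f) h') ∧
    ((RingQuot.mkAlgHom k (fulcrumRel k f)).toLinearMap ∘ₗ
      (TensorAlgebra.ι k (M := M)) ∘ₗ f) (1 : H) = 1 := by
  obtain ⟨p, hpf, hps⟩ := LinearMap.exists_leftInverse_of_isCompl_range hf hcompl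
  obtain ⟨q, hqs, hqf⟩ := LinearMap.exists_leftInverse_of_isCompl_range hs hcompl.symm
  set π := RingQuot.mkAlgHom k (fulcrumRel k f)
  let ρ := RingQuot.liftAlgHom k ⟨fulcrumRep (V := V) p q, fulcrumRep_rel p q f hadj hpf hqf⟩
  have hρ (m : TensorAlgebra k M) : ρ (π m) = fulcrumRep p q m :=
    RingQuot.liftAlgHom_mkAlgHom_apply _ _ _ _
  let eval (u : RingQuot (fulcrumRel k f)) := (ρ u).unop ((1 : TensorAlgebra k V) ⊗ₜ[k] (1 : H))
  refine ⟨?_, ?_, fun h h' => ?_, ?_⟩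
  · have hlift : TensorAlgebra.lift k (π.toLinearMap ∘ₗ TensorAlgebra.ι k ∘ₗ s) =
        π.comp (TensorAlgebra.lift k (TensorAlgebra.ι k ∘ₗ s)) := by
      ext; simp
    refine Function.Injective.of_comp (f := eval) ?_
    convert Algebra.TensorProduct.includeLeft_injective (S := k) (A := TensorAlgebra k V)
      (Bialgebra.algebraMap_injective (R := k) (A := H)) using 1
    ext t
    simp [eval, hlift, hρ, fulcrumRep_lift_apply_tmul_one p q s hqs hps]
  · refine Function.Injective.of_comp (f := eval) ?_
    convert Algebra.TensorProduct.includeRight_injective (B := H)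
      (TensorAlgebra.algebraMap_leftInverse (R := k) (M := V)).injective using 1
    ext a
    simp [eval, hρ, fulcrumRep_ι, fulcrumEnd_f p q f hadj hpf hqf]
  · simp only [LinearMap.comp_apply, AlgHom.toLinearMap_apply, ← map_mul]
    exact (RingQuot.mkAlgHom_rel k (s := fulcrumRel k f) (Or.inl ⟨h, h', rfl, rfl⟩)).symm
  · simpa using RingQuot.mkAlgHom_rel k (s := fulcrumRel k f) (Or.inr (Or.inl ⟨rfl, rfl⟩))

/-- Under the fulcrum hypotheses, the algebra homomorphism
`T(V) → T(V)#_M H` determined by `v ↦ π(ι(s(v)))` is injective, and the (k-linear) map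
`H → T(V)#_M H`, `h ↦ π(ι(f(h)))`, is injective, multiplicative and unital, i.e. an
injective algebra homomorphism; thus `T(V)` and `H` embed as subalgebras of `T(V)#_M H`. -/
theorem fulcrum_subalgebras
    {k H M V : Type*} [Field k] [Ring H] [HopfAlgebra k H]
    [AddCommGroup M] [Module k M] [Module H M] [IsScalarTower k H M]
    [AddCommGroup V] [Module k V]
    (f : H →ₗ[k] M) (s : V →ₗ[k] M)
    (hf : Function.Injective f) (hs : Function.Injective s)
    (hS : Function.Bijective (HopfAlgebra.antipode (R := k) (A := H)))
    (hadj : ∀ h a : H, h • f a = f (adjL k a h))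
    (hcompl : IsCompl (LinearMap.range f) (LinearMap.range s)) :
    Function.Injective
      (TensorAlgebra.lift k
        ((RingQuot.mkAlgHom k (fulcrumRel k f)).toLinearMap ∘ₗ
          (TensorAlgebra.ι k (M := M)) ∘ₗ s)) ∧
    Function.Injective
      ((RingQuot.mkAlgHom k (fulcrumRel k f)).toLinearMap ∘ₗ
        (TensorAlgebra.ι k (M := M)) ∘ₗ f) ∧
    (∀ h h' : H,
      ((RingQuot.mkAlgHom k (fulcrumRel k f)).toLinearMap ∘ₗ
        (TensorAlgebra.ι k (M := M)) ∘ₗ f) (h * h') =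
      ((RingQuot.mkAlgHom k (fulcrumRel k f)).toLinearMap ∘ₗ
        (TensorAlgebra.ι k (M := M)) ∘ₗ f) h *
      ((RingQuot.mkAlgHom k (fulcrumRel k f)).toLinearMap ∘ₗ
        (TensorAlgebra.ι k (M := M)) ∘ₗ f) h') ∧
    ((RingQuot.mkAlgHom k (fulcrumRel k f)).toLinearMap ∘ₗ
      (TensorAlgebra.ι k (M := M)) ∘ₗ f) (1 : H) = 1 :=
  fulcrum_subalgebras_general f s hf hs hadj hcompl
end

section
/- Assume that for all g ∈ G and i ∈ I, ρ(g)(x_i) lies in the span of {x_j : d(j) = g d(i) g⁻¹} (Yetter–Drinfeld compatibility of the degree function d). If b satisfies the cocycle condition b(gh, x_i) = b(g, ρ(h)x_i) + b(h, x_i) for all g, h ∈ G and i ∈ I, then the linear maps T(g) : V ⊕ kG → V ⊕ kG defined by T(g)(x_i, 0) = (ρ(g)x_i, b(g, x_i)(1 − g d(i) g⁻¹)) and T(g)(0, a) = (0, Ad(g)a) satisfy T(gh) = T(g) ∘ T(h) for all g, h ∈ G; that is, they make M = V ⊕ kG a kG-module which is an extension of V by kG, where kG carries the adjoint action. -/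
/-- The adjoint action `Ad(g) : kG → kG`, the `k`-linear extension of `a ↦ g a g⁻¹`. -/
noncomputable def AdL (k : Type*) {G : Type*} [Field k] [Group G] (g : G) :
    MonoidAlgebra k G →ₗ[k] MonoidAlgebra k G :=
  LinearMap.mulLeft k (MonoidAlgebra.of k G g) ∘ₗ
    LinearMap.mulRight k (MonoidAlgebra.of k G g⁻¹)

/-- The linear map `T(g) : V ⊕ kG → V ⊕ kG` with
`T(g)(x_i, 0) = (ρ(g)x_i, b(g,x_i)(1 − g d(i) g⁻¹))` and `T(g)(0, a) = (0, Ad(g)a)`. -/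
noncomputable def extAction (k : Type*) {G I V : Type*} [Field k] [Group G]
    [AddCommGroup V] [Module k V]
    (x : Module.Basis I k V) (ρ : G →* (V ≃ₗ[k] V)) (d : I → G) (b : G → I → k) (g : G) :
    V × MonoidAlgebra k G →ₗ[k] V × MonoidAlgebra k G :=
  LinearMap.prod
    ((ρ g).toLinearMap ∘ₗ LinearMap.fst k V (MonoidAlgebra k G))
    ((x.constr k fun i =>
        b g i • ((1 : MonoidAlgebra k G) - MonoidAlgebra.of k G (g * d i * g⁻¹))) ∘ₗ
        LinearMap.fst k V (MonoidAlgebra k G) +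
      AdL k g ∘ₗ LinearMap.snd k V (MonoidAlgebra k G))

/-! `T(g)` is block lower triangular with diagonal blocks `ρ(g)` and `Ad(g)`, so `T(gh) = T(g) T(h)`
reduces to the multiplicativity of `ρ` and `Ad` together with the twisted cocycle identity
`C(gh) = C(g) ρ(h) + Ad(g) C(h)` for the off-diagonal block `C(g) x_i = b(g, x_i)(1 - g d(i) g⁻¹)`.
By the Yetter–Drinfeld compatibility, `ρ(h) x_i` is a combination of basis vectors of degree
`h d(i) h⁻¹`, on which `C(g)` acts as `b(g, ·)` times the single element `1 - g h d(i) h⁻¹ g⁻¹`;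
the cocycle condition on `b` then yields the identity. -/

open MonoidAlgebra

theorem LinearMap.prod_triangular_comp {R M N : Type*} [CommSemiring R] [AddCommMonoid M]
    [Module R M] [AddCommMonoid N] [Module R N]
    (A A' : M →ₗ[R] M) (C C' : M →ₗ[R] N) (D D' : N →ₗ[R] N) :
    (A ∘ₗ fst R M N).prod (C ∘ₗ fst R M N + D ∘ₗ snd R M N) ∘ₗ
        (A' ∘ₗ fst R M N).prod (C' ∘ₗ fst R M N + D' ∘ₗ snd R M N) =
      ((A ∘ₗ A') ∘ₗ fst R M N).prod
        ((C ∘ₗ A' + D ∘ₗ C') ∘ₗ fst R M N + (D ∘ₗ D') ∘ₗ snd R M N) := by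
  ext <;> simp

theorem Module.Basis.constr_smul_apply_of_mem_span {ι R M N : Type*} [CommSemiring R]
    [AddCommMonoid M] [Module R M] [AddCommMonoid N] [Module R N]
    (x : Module.Basis ι R M) (f : ι → R) (w : ι → N) {n : N} {v : M}
    (hv : v ∈ Submodule.span R {v | ∃ j, w j = n ∧ v = x j}) :
    x.constr R (fun i => f i • w i) v = x.constr R f v • n := by
  induction hv using Submodule.span_induction with
  | mem v hv =>
    obtain ⟨j, hj, rfl⟩ := hv
    simp [hj]
  | zero => simp
  | add u w _ _ hu hw => rw [map_add, map_add, hu, hw, add_smul]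
  | smul a u _ hu => rw [map_smul, map_smul, hu, smul_eq_mul, mul_smul]

theorem AdL_apply (k : Type*) {G : Type*} [Field k] [Group G] (g : G) (a : MonoidAlgebra k G) :
    AdL k g a = of k G g * a * of k G g⁻¹ := by
  simp [AdL, mul_assoc]

theorem AdL_mul (k : Type*) {G : Type*} [Field k] [Group G] (g h : G) :
    AdL k (g * h) = AdL k g ∘ₗ AdL k h := by
  ext a
  simp [AdL_apply, mul_assoc]

theorem AdL_one_sub_of (k : Type*) {G : Type*} [Field k] [Group G] (g c : G) :
    AdL k g (1 - of k G c) = 1 - of k G (g * c * g⁻¹) := by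
  rw [AdL_apply, mul_sub, sub_mul, mul_one, ← map_mul, ← map_mul, ← map_mul, mul_inv_cancel,
    map_one]

section

variable (k : Type*) {G I V : Type*} [Field k] [Group G] [AddCommGroup V] [Module k V]
  (x : Module.Basis I k V) (d : I → G) (b : G → I → k)

noncomputable def extCocycle (g : G) : V →ₗ[k] MonoidAlgebra k G :=
  x.constr k fun i => b g i • (1 - of k G (g * d i * g⁻¹))

theorem extAction_eq (ρ : G →* (V ≃ₗ[k] V)) (g : G) :
    extAction k x ρ d b g =
      ((ρ g).toLinearMap ∘ₗ LinearMap.fst k V _).prod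
        (extCocycle k x d b g ∘ₗ LinearMap.fst k V _ + AdL k g ∘ₗ LinearMap.snd k V _) :=
  rfl

theorem extCocycle_mul (ρ : G →* (V ≃ₗ[k] V))
    (hYD : ∀ (g : G) (i : I),
      (ρ g) (x i) ∈ Submodule.span k {v | ∃ j, d j = g * d i * g⁻¹ ∧ v = x j})
    (hcoc : ∀ (g h : G) (i : I),
      b (g * h) i = (x.constr k fun j => b g j) ((ρ h) (x i)) + b h i) (g h : G) :
    extCocycle k x d b (g * h) =
      extCocycle k x d b g ∘ₗ (ρ h).toLinearMap + AdL k g ∘ₗ extCocycle k x d b h := by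
  refine x.ext fun i => ?_
  have hρ : extCocycle k x d b g (ρ h (x i)) =
      x.constr k (b g) (ρ h (x i)) • (1 - of k G (g * (h * d i * h⁻¹) * g⁻¹)) := by
    refine x.constr_smul_apply_of_mem_span _ _ (Submodule.span_mono ?_ (hYD h i))
    rintro _ ⟨j, hj, rfl⟩
    exact ⟨j, by rw [hj], rfl⟩
  have hconj : g * h * d i * (g * h)⁻¹ = g * (h * d i * h⁻¹) * g⁻¹ := by group
  rw [LinearMap.add_apply, LinearMap.comp_apply, LinearEquiv.coe_coe, hρ, LinearMap.comp_apply]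
  simp only [extCocycle, Module.Basis.constr_basis, map_smul, AdL_one_sub_of, hconj, hcoc g h i,
    add_smul]

end

/-- Given the Yetter–Drinfeld compatibility of the degree function `d` and the
cocycle condition on `b`, the maps `T(g)` satisfy `T(gh) = T(g) ∘ T(h)`, i.e. they make
`M = V ⊕ kG` a `kG`-module which is an extension of `V` by `kG` (with `kG` carrying the
adjoint action). -/
theorem extAction_mul {k G I V : Type*} [Field k] [Group G]
    [AddCommGroup V] [Module k V]
    (x : Module.Basis I k V) (ρ : G →* (V ≃ₗ[k] V)) (d : I → G) (b : G → I → k)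
    (hYD : ∀ (g : G) (i : I),
      (ρ g) (x i) ∈ Submodule.span k {v | ∃ j, d j = g * d i * g⁻¹ ∧ v = x j})
    (hcoc : ∀ (g h : G) (i : I),
      b (g * h) i = (x.constr k fun j => b g j) ((ρ h) (x i)) + b h i) :
    ∀ g h : G,
      extAction k x ρ d b (g * h) = (extAction k x ρ d b g) ∘ₗ extAction k x ρ d b h := by
  intro g h
  rw [extAction_eq, extAction_eq, extAction_eq, LinearMap.prod_triangular_comp,
    extCocycle_mul k x d b ρ hYD hcoc, AdL_mul, map_mul, LinearEquiv.coe_toLinearMap_mul,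
    Module.End.mul_eq_comp]
end

section
/- Let k be a field of characteristic 2 and ρ_X : G_X → Perm(ZMod 3) the group homomorphism with ρ_X(g_i)(j) = i ▷ j. A function λ : ZMod 3 × ZMod 3 → k satisfies λ(i, j▷k) + λ(j, k) = λ(i▷j, i▷k) + λ(i, k) for all i, j, k ∈ ZMod 3 (condition eq:lij) if and only if there exists a cocycle b : G_X × ZMod 3 → k (with respect to ρ_X) such that b(g_i, j) = λ(i, j) for all i, j ∈ ZMod 3. -/
/-- The rack operation `i ▷ j = 2i − j` on `ZMod 3` (the rack of transpositions in `S₃`). -/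
def rackOp (i j : ZMod 3) : ZMod 3 := 2 * i - j

/-- The defining relations `g_i g_j (g_{i▷j} g_i)⁻¹` of the enveloping group `G_X`. -/
def envRels : Set (FreeGroup (ZMod 3)) :=
  {r | ∃ i j : ZMod 3,
    r = FreeGroup.of i * FreeGroup.of j * (FreeGroup.of (rackOp i j) * FreeGroup.of i)⁻¹}

/-- The enveloping group `G_X` of the rack `(ZMod 3, ▷)`, presented by generators `g₀, g₁, g₂`
and relations `g_i g_j = g_{i▷j} g_i`. -/
def EnvGroup : Type := PresentedGroup envRels

instance : Group EnvGroup := by unfold EnvGroup; infer_instance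

/-!
A map `b : G → α → k` is a cocycle for `ρ` exactly when `u ↦ ((i, x) ↦ (ρ u i, b u i + x))` is a
homomorphism `G →* Perm (α × k)`. So `λ` extends to a cocycle on a presented group iff the shears
`(j, x) ↦ (ρ(g_i) j, λ(i, j) + x)` of `α × k` satisfy the defining relations, and for the enveloping
group the relation `g_i g_j = g_{i▷j} g_i`, read on these shears, is condition eq:lij.
-/

open Equiv

section Shear

variable {α k : Type*} [AddGroup k]

def shear (σ : Perm α) (f : α → k) : Perm (α × k) :=
  prodShear σ fun i => Equiv.addLeft (f i)

@[simp]
lemma shear_apply (σ : Perm α) (f : α → k) (p : α × k) : shear σ f p = (σ p.1, f p.1 + p.2) :=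
  rfl

lemma shear_mul (σ τ : Perm α) (f g : α → k) :
    shear σ f * shear τ g = shear (σ * τ) fun i => f (τ i) + g i := by
  ext p <;> simp [add_assoc]

lemma shear_one : shear (1 : Perm α) (0 : α → k) = 1 := by
  ext p <;> simp

lemma shear_inv (σ : Perm α) (f : α → k) : (shear σ f)⁻¹ = shear σ⁻¹ fun i => -f (σ⁻¹ i) :=
  inv_eq_of_mul_eq_one_left <| by rw [shear_mul]; ext p <;> simp

lemma shear_inj {σ τ : Perm α} {f g : α → k} : shear σ f = shear τ g ↔ σ = τ ∧ f = g := by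
  refine ⟨fun h => ⟨Equiv.ext fun i => ?_, funext fun i => ?_⟩, fun ⟨hσ, hf⟩ => hσ ▸ hf ▸ rfl⟩
  · simpa using congrArg Prod.fst (DFunLike.congr_fun h (i, 0))
  · simpa using congrArg Prod.snd (DFunLike.congr_fun h (i, 0))

variable (α k) in
def shearGraph : Subgroup (Perm α × Perm (α × k)) where
  carrier := {p | ∃ f, shear p.1 f = p.2}
  mul_mem' := by
    rintro ⟨σ, _⟩ ⟨τ, _⟩ ⟨f, rfl : shear σ f = _⟩ ⟨g, rfl : shear τ g = _⟩
    exact ⟨_, (shear_mul σ τ f g).symm⟩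
  one_mem' := ⟨0, shear_one⟩
  inv_mem' := by
    rintro ⟨σ, _⟩ ⟨f, rfl : shear σ f = _⟩
    exact ⟨_, (shear_inv σ f).symm⟩

end Shear

section Cocycle

variable {α k G : Type*} [AddGroup k] [Group G]

def IsCocycle (ρ : G →* Perm α) (b : G → α → k) : Prop :=
  ∀ u v i, b (u * v) i = b u (ρ v i) + b v i

lemma isCocycle_iff_shear_mul (ρ : G →* Perm α) (b : G → α → k) :
    IsCocycle ρ b ↔
      ∀ u v, shear (ρ (u * v)) (b (u * v)) = shear (ρ u) (b u) * shear (ρ v) (b v) := by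
  simp only [shear_mul, map_mul, shear_inj, true_and, funext_iff, IsCocycle]

def IsCocycle.shearHom {ρ : G →* Perm α} {b : G → α → k} (hb : IsCocycle ρ b) :
    G →* Perm (α × k) :=
  MonoidHom.mk' (fun u => shear (ρ u) (b u)) ((isCocycle_iff_shear_mul ρ b).1 hb)

theorem exists_cocycle_extending_iff {β : Type*} {rels : Set (FreeGroup β)}
    (ρ : PresentedGroup rels →* Perm α) (lam : β → α → k) :
    (∃ b, IsCocycle ρ b ∧ ∀ x i, b (.of x) i = lam x i) ↔
      ∀ r ∈ rels, FreeGroup.lift (fun x => shear (ρ (.of x)) (lam x)) r = 1 := by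
  constructor
  · rintro ⟨b, hb, hof⟩ r hr
    have hlift : FreeGroup.lift (fun x => shear (ρ (.of x)) (lam x)) =
        hb.shearHom.comp (PresentedGroup.mk rels) :=
      FreeGroup.ext_hom _ _ fun x => by
        simp only [FreeGroup.lift_apply_of]
        exact congrArg (shear _) (funext (hof x)).symm
    rw [hlift, MonoidHom.comp_apply, PresentedGroup.one_of_mem hr, map_one]
  · intro h
    set Φ := PresentedGroup.toGroup h
    have hgen : ⊤ ≤ (shearGraph α k).comap (ρ.prod Φ) := by
      rw [← PresentedGroup.closure_range_of, Subgroup.closure_le]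
      rintro _ ⟨x, rfl⟩
      exact ⟨lam x, (PresentedGroup.toGroup.of h).symm⟩
    choose b hb using fun u => hgen (Subgroup.mem_top u)
    have hΦ : ∀ u, Φ u = shear (ρ u) (b u) := fun u => (hb u).symm
    refine ⟨b, (isCocycle_iff_shear_mul ρ b).2 fun u v => ?_, fun x => ?_⟩
    · rw [← hΦ, ← hΦ, ← hΦ, map_mul]
    · exact funext_iff.1 (shear_inj.1 ((hΦ _).symm.trans (PresentedGroup.toGroup.of h))).2

end Cocycle

lemma envGroup_of_mul_of (i j : ZMod 3) :
    (PresentedGroup.of i * PresentedGroup.of j : PresentedGroup envRels) =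
      PresentedGroup.of (rackOp i j) * PresentedGroup.of i :=
  PresentedGroup.mk_eq_mk_of_mul_inv_mem ⟨i, j, rfl⟩

lemma lift_shear_envRel_eq_one_iff {k : Type*} [AddGroup k]
    (ρ : PresentedGroup envRels →* Perm (ZMod 3))
    (hρ : ∀ i j : ZMod 3, ρ (.of i) j = rackOp i j) (lam : ZMod 3 → ZMod 3 → k) (i j : ZMod 3) :
    FreeGroup.lift (fun x => shear (ρ (.of x)) (lam x))
        (.of i * .of j * (.of (rackOp i j) * .of i)⁻¹) = 1 ↔
      ∀ l, lam i (rackOp j l) + lam j l = lam (rackOp i j) (rackOp i l) + lam i l := by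
  rw [map_mul, map_inv, mul_inv_eq_one, map_mul, map_mul]
  simp only [FreeGroup.lift_apply_of, shear_mul, ← map_mul ρ, envGroup_of_mul_of i j, shear_inj,
    true_and, funext_iff, hρ]

theorem lij_iff_extends_to_cocycle_general {k : Type*} [Field k]
    (ρX : EnvGroup →* Equiv.Perm (ZMod 3))
    (hρX : ∀ i j : ZMod 3, ρX (PresentedGroup.of (rels := envRels) i) j = rackOp i j)
    (lam : ZMod 3 → ZMod 3 → k) :
    (∀ i j l : ZMod 3,
        lam i (rackOp j l) + lam j l = lam (rackOp i j) (rackOp i l) + lam i l) ↔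
      ∃ b : EnvGroup → ZMod 3 → k,
        (∀ (u v : EnvGroup) (i : ZMod 3), b (u * v) i = b u (ρX v i) + b v i) ∧
        (∀ i j : ZMod 3, b (PresentedGroup.of (rels := envRels) i) j = lam i j) := by
  refine Iff.symm <| (exists_cocycle_extending_iff ρX lam).trans ⟨fun h i j => ?_, fun h => ?_⟩
  · exact (lift_shear_envRel_eq_one_iff ρX hρX lam i j).1 (h _ ⟨i, j, rfl⟩)
  · rintro _ ⟨i, j, rfl⟩
    exact (lift_shear_envRel_eq_one_iff ρX hρX lam i j).2 (h i j)

/-- Over a field `k` of characteristic `2`, a function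
`λ : ZMod 3 × ZMod 3 → k` satisfies condition eq:lij iff it extends to a cocycle
`b : G_X × ZMod 3 → k` with respect to `ρ_X`, i.e. `b(g_i, j) = λ(i,j)`. -/
theorem lij_iff_extends_to_cocycle {k : Type*} [Field k] [CharP k 2]
    (ρX : EnvGroup →* Equiv.Perm (ZMod 3))
    (hρX : ∀ i j : ZMod 3, ρX (PresentedGroup.of (rels := envRels) i) j = rackOp i j)
    (lam : ZMod 3 → ZMod 3 → k) :
    (∀ i j l : ZMod 3,
        lam i (rackOp j l) + lam j l = lam (rackOp i j) (rackOp i l) + lam i l) ↔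
      ∃ b : EnvGroup → ZMod 3 → k,
        (∀ (u v : EnvGroup) (i : ZMod 3), b (u * v) i = b u (ρX v i) + b v i) ∧
        (∀ i j : ZMod 3, b (PresentedGroup.of (rels := envRels) i) j = lam i j) :=
  lij_iff_extends_to_cocycle_general ρX hρX lam
end

section
/- Let k be a field of characteristic 2. For i ∈ ZMod 3 let t_i ∈ Perm(ZMod 3) be the transposition interchanging the two elements different from i (so that t_i t_j t_i⁻¹ = t_{i▷j} and σ t_i σ⁻¹ = t_{σ(i)} for σ ∈ Perm(ZMod 3)). A function λ : ZMod 3 × ZMod 3 → k admits a cocycle b : Perm(ZMod 3) × ZMod 3 → k, with respect to the identity homomorphism ρ = id (natural action of Perm(ZMod 3) on ZMod 3), such that b(t_i, j) = λ(i, j) for all i, j, if and only if λ satisfies λ(i, j▷k) + λ(j, k) = λ(i▷j, i▷k) + λ(i, k) for all i, j, k ∈ ZMod 3 (condition eq:lij) and λ(i, j) = λ(i, i▷j) for all i, j ∈ ZMod 3. -/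
/-- The transposition `t_i ∈ Perm (ZMod 3)` interchanging the two elements different
from `i`, namely `i+1` and `i+2`. -/
def transp (i : ZMod 3) : Equiv.Perm (ZMod 3) := Equiv.swap (i + 1) (i + 2)

lemma transp_app : ∀ i l : ZMod 3, transp i l = rackOp i l := by decide

lemma transp_sq : ∀ i : ZMod 3, transp i * transp i = 1 := by decide

lemma conjT : ∀ i j : ZMod 3, transp i * transp j * transp i = transp (rackOp i j) := by decide

lemma rack_invol : ∀ i l : ZMod 3, rackOp i (rackOp i l) = l := by decide

lemma perm_cases : ∀ σ : Equiv.Perm (ZMod 3), σ = 1 ∨ σ = transp 0 ∨ σ = transp 1 ∨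
    σ = transp 2 ∨ σ = transp 0 * transp 1 ∨ σ = transp 0 * transp 2 := by decide

/-- The candidate cocycle, defined case by case on the six permutations. -/
def permB {k : Type*} [Field k] (lam : ZMod 3 → ZMod 3 → k)
    (σ : Equiv.Perm (ZMod 3)) (l : ZMod 3) : k :=
  if σ 0 = 0 then (if σ 1 = 1 then 0 else lam 0 l)
  else if σ 0 = 1 then (if σ 1 = 0 then lam 2 l else lam 0 (rackOp 1 l) + lam 1 l)
  else (if σ 1 = 1 then lam 1 l else lam 0 (rackOp 2 l) + lam 2 l)

/-- Over a field `k` of characteristic `2`, a function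
`λ : ZMod 3 × ZMod 3 → k` admits a cocycle `b : Perm (ZMod 3) × ZMod 3 → k` (with respect
to the natural action of `Perm (ZMod 3)` on `ZMod 3`) with `b(t_i, j) = λ(i,j)` iff `λ`
satisfies condition eq:lij and `λ(i,j) = λ(i, i▷j)` for all `i, j`. -/
theorem perm_cocycle_iff {k : Type*} [Field k] [CharP k 2]
    (lam : ZMod 3 → ZMod 3 → k) :
    (∃ b : Equiv.Perm (ZMod 3) → ZMod 3 → k,
        (∀ (σ τ : Equiv.Perm (ZMod 3)) (i : ZMod 3), b (σ * τ) i = b σ (τ i) + b τ i) ∧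
        (∀ i j : ZMod 3, b (transp i) j = lam i j)) ↔
      ((∀ i j l : ZMod 3,
          lam i (rackOp j l) + lam j l = lam (rackOp i j) (rackOp i l) + lam i l) ∧
        (∀ i j : ZMod 3, lam i j = lam i (rackOp i j))) := by
  have h20 : (2 : k) = 0 := by exact_mod_cast CharP.cast_eq_zero k 2
  constructor
  · rintro ⟨b, hc, hb⟩
    have hb1 : ∀ m, b 1 m = 0 := by
      intro m
      have h := hc 1 1 m
      rw [one_mul] at h
      exact left_eq_add.mp h
    have key : ∀ i m : ZMod 3, lam i (rackOp i m) + lam i m = 0 := by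
      intro i m
      have h := hc (transp i) (transp i) m
      rw [transp_sq i, hb1, hb, hb, transp_app] at h
      exact h.symm
    have h2 : ∀ i j : ZMod 3, lam i j = lam i (rackOp i j) := by
      intro i j
      linear_combination key i j - lam i (rackOp i j) * h20
    refine ⟨?_, h2⟩
    intro i j l
    have hA := hc (transp i * transp j) (transp i) (rackOp i l)
    rw [conjT i j] at hA
    simp only [transp_app, rack_invol] at hA
    simp only [hb] at hA
    have hB := hc (transp i) (transp j) l
    simp only [transp_app, hb] at hB
    linear_combination -hA - hB - lam i l * h20 + h2 i l
  · rintro ⟨h1, h2⟩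
    have E1_0_0_0 : lam 0 0 + lam 0 0 = lam 0 0 + lam 0 0 := h1 0 0 0
    have E1_0_0_1 : lam 0 2 + lam 0 1 = lam 0 2 + lam 0 1 := h1 0 0 1
    have E1_0_0_2 : lam 0 1 + lam 0 2 = lam 0 1 + lam 0 2 := h1 0 0 2
    have E1_0_1_0 : lam 0 2 + lam 1 0 = lam 2 0 + lam 0 0 := h1 0 1 0
    have E1_0_1_1 : lam 0 1 + lam 1 1 = lam 2 2 + lam 0 1 := h1 0 1 1
    have E1_0_1_2 : lam 0 0 + lam 1 2 = lam 2 1 + lam 0 2 := h1 0 1 2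
    have E1_0_2_0 : lam 0 1 + lam 2 0 = lam 1 0 + lam 0 0 := h1 0 2 0
    have E1_0_2_1 : lam 0 0 + lam 2 1 = lam 1 2 + lam 0 1 := h1 0 2 1
    have E1_0_2_2 : lam 0 2 + lam 2 2 = lam 1 1 + lam 0 2 := h1 0 2 2
    have E1_1_0_0 : lam 1 0 + lam 0 0 = lam 2 2 + lam 1 0 := h1 1 0 0
    have E1_1_0_1 : lam 1 2 + lam 0 1 = lam 2 1 + lam 1 1 := h1 1 0 1
    have E1_1_0_2 : lam 1 1 + lam 0 2 = lam 2 0 + lam 1 2 := h1 1 0 2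
    have E1_1_1_0 : lam 1 2 + lam 1 0 = lam 1 2 + lam 1 0 := h1 1 1 0
    have E1_1_1_1 : lam 1 1 + lam 1 1 = lam 1 1 + lam 1 1 := h1 1 1 1
    have E1_1_1_2 : lam 1 0 + lam 1 2 = lam 1 0 + lam 1 2 := h1 1 1 2
    have E1_1_2_0 : lam 1 1 + lam 2 0 = lam 0 2 + lam 1 0 := h1 1 2 0
    have E1_1_2_1 : lam 1 0 + lam 2 1 = lam 0 1 + lam 1 1 := h1 1 2 1
    have E1_1_2_2 : lam 1 2 + lam 2 2 = lam 0 0 + lam 1 2 := h1 1 2 2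
    have E1_2_0_0 : lam 2 0 + lam 0 0 = lam 1 1 + lam 2 0 := h1 2 0 0
    have E1_2_0_1 : lam 2 2 + lam 0 1 = lam 1 0 + lam 2 1 := h1 2 0 1
    have E1_2_0_2 : lam 2 1 + lam 0 2 = lam 1 2 + lam 2 2 := h1 2 0 2
    have E1_2_1_0 : lam 2 2 + lam 1 0 = lam 0 1 + lam 2 0 := h1 2 1 0
    have E1_2_1_1 : lam 2 1 + lam 1 1 = lam 0 0 + lam 2 1 := h1 2 1 1
    have E1_2_1_2 : lam 2 0 + lam 1 2 = lam 0 2 + lam 2 2 := h1 2 1 2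
    have E1_2_2_0 : lam 2 1 + lam 2 0 = lam 2 1 + lam 2 0 := h1 2 2 0
    have E1_2_2_1 : lam 2 0 + lam 2 1 = lam 2 0 + lam 2 1 := h1 2 2 1
    have E1_2_2_2 : lam 2 2 + lam 2 2 = lam 2 2 + lam 2 2 := h1 2 2 2
    have E2_0_0 : lam 0 0 = lam 0 0 := h2 0 0
    have E2_0_1 : lam 0 1 = lam 0 2 := h2 0 1
    have E2_0_2 : lam 0 2 = lam 0 1 := h2 0 2
    have E2_1_0 : lam 1 0 = lam 1 2 := h2 1 0
    have E2_1_1 : lam 1 1 = lam 1 1 := h2 1 1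
    have E2_1_2 : lam 1 2 = lam 1 0 := h2 1 2
    have E2_2_0 : lam 2 0 = lam 2 1 := h2 2 0
    have E2_2_1 : lam 2 1 = lam 2 0 := h2 2 1
    have E2_2_2 : lam 2 2 = lam 2 2 := h2 2 2
    have G : ∀ (σ : Equiv.Perm (ZMod 3)) (i l : ZMod 3),
        permB lam (σ * transp i) l = permB lam σ (transp i l) + lam i l := by
      intro σ i l
      rcases perm_cases σ with h | h | h | h | h | h
      · -- σ = 1
        subst h; fin_cases i <;> fin_cases l
        · show lam 0 0 = ((0:k)) + lam 0 0
          ring1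
        · show lam 0 1 = ((0:k)) + lam 0 1
          ring1
        · show lam 0 2 = ((0:k)) + lam 0 2
          ring1
        · show lam 1 0 = ((0:k)) + lam 1 0
          ring1
        · show lam 1 1 = ((0:k)) + lam 1 1
          ring1
        · show lam 1 2 = ((0:k)) + lam 1 2
          ring1
        · show lam 2 0 = ((0:k)) + lam 2 0
          ring1
        · show lam 2 1 = ((0:k)) + lam 2 1
          ring1
        · show lam 2 2 = ((0:k)) + lam 2 2
          ring1
      · -- σ = transp 0
        subst h; fin_cases i <;> fin_cases l
        · show (0:k) = (lam 0 0) + lam 0 0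
          linear_combination (((-1:k)) * lam 0 0) * h20
        · show (0:k) = (lam 0 2) + lam 0 1
          linear_combination E1_0_1_0 + E1_0_2_0 + (lam 0 0 + ((-1:k)) * lam 0 1 + ((-1:k)) * lam 0 2) * h20
        · show (0:k) = (lam 0 1) + lam 0 2
          linear_combination E1_0_1_0 + E1_0_2_0 + (lam 0 0 + ((-1:k)) * lam 0 1 + ((-1:k)) * lam 0 2) * h20
        · show lam 0 2 + lam 1 0 = (lam 0 2) + lam 1 0
          ring1
        · show lam 0 1 + lam 1 1 = (lam 0 1) + lam 1 1
          ring1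
        · show lam 0 0 + lam 1 2 = (lam 0 0) + lam 1 2
          ring1
        · show lam 0 1 + lam 2 0 = (lam 0 1) + lam 2 0
          ring1
        · show lam 0 0 + lam 2 1 = (lam 0 0) + lam 2 1
          ring1
        · show lam 0 2 + lam 2 2 = (lam 0 2) + lam 2 2
          ring1
      · -- σ = transp 1
        subst h; fin_cases i <;> fin_cases l
        · show lam 0 1 + lam 2 0 = (lam 1 0) + lam 0 0
          linear_combination E1_0_2_0
        · show lam 0 0 + lam 2 1 = (lam 1 2) + lam 0 1
          linear_combination E1_0_1_0 + E1_0_1_2 + E1_0_2_0 + (lam 0 0 + ((-1:k)) * lam 0 1 + ((-1:k)) * lam 1 2 + lam 2 1) * h20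
        · show lam 0 2 + lam 2 2 = (lam 1 1) + lam 0 2
          linear_combination E1_0_1_1 + (((-1:k)) * lam 1 1 + lam 2 2) * h20
        · show (0:k) = (lam 1 2) + lam 1 0
          linear_combination E1_0_1_0 + E1_0_1_1 + E1_1_0_0 + E1_1_0_2 + (((-1:k)) * lam 0 2 + ((-1:k)) * lam 1 0 + ((-1:k)) * lam 1 1 + lam 2 0 + lam 2 2) * h20
        · show (0:k) = (lam 1 1) + lam 1 1
          linear_combination (((-1:k)) * lam 1 1) * h20
        · show (0:k) = (lam 1 0) + lam 1 2
          linear_combination E1_0_1_0 + E1_0_1_1 + E1_1_0_0 + E1_1_0_2 + (((-1:k)) * lam 0 2 + ((-1:k)) * lam 1 0 + ((-1:k)) * lam 1 1 + lam 2 0 + lam 2 2) * h20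
        · show lam 0 2 + lam 1 0 = (lam 1 1) + lam 2 0
          linear_combination E1_0_1_0 + E1_0_1_1 + E1_1_0_0 + (((-1:k)) * lam 1 1 + lam 2 2) * h20
        · show lam 0 1 + lam 1 1 = (lam 1 0) + lam 2 1
          linear_combination E1_0_1_2 + E1_0_2_0 + E1_1_0_2
        · show lam 0 0 + lam 1 2 = (lam 1 2) + lam 2 2
          linear_combination E1_1_0_0
      · -- σ = transp 2
        subst h; fin_cases i <;> fin_cases l
        · show lam 0 2 + lam 1 0 = (lam 2 0) + lam 0 0
          linear_combination E1_0_1_0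
        · show lam 0 1 + lam 1 1 = (lam 2 2) + lam 0 1
          linear_combination E1_0_1_1
        · show lam 0 0 + lam 1 2 = (lam 2 1) + lam 0 2
          linear_combination E1_0_1_2
        · show lam 0 1 + lam 2 0 = (lam 2 2) + lam 1 0
          linear_combination E1_0_2_0 + E1_1_0_0
        · show lam 0 0 + lam 2 1 = (lam 2 1) + lam 1 1
          linear_combination E1_0_1_1 + E1_1_0_0 + (((-1:k)) * lam 1 1 + lam 2 2) * h20
        · show lam 0 2 + lam 2 2 = (lam 2 0) + lam 1 2
          linear_combination E1_0_1_1 + E1_1_0_2 + (((-1:k)) * lam 1 1 + lam 2 2) * h20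
        · show (0:k) = (lam 2 1) + lam 2 0
          linear_combination E1_0_1_1 + E1_0_1_2 + E1_1_0_0 + E1_1_0_2 + (((-1:k)) * lam 0 0 + ((-1:k)) * lam 1 1 + lam 2 2) * h20
        · show (0:k) = (lam 2 0) + lam 2 1
          linear_combination E1_0_1_1 + E1_0_1_2 + E1_1_0_0 + E1_1_0_2 + (((-1:k)) * lam 0 0 + ((-1:k)) * lam 1 1 + lam 2 2) * h20
        · show (0:k) = (lam 2 2) + lam 2 2
          linear_combination (((-1:k)) * lam 2 2) * h20
      · -- σ = transp 0 * transp 1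
        subst h; fin_cases i <;> fin_cases l
        · show lam 2 0 = (lam 0 2 + lam 1 0) + lam 0 0
          linear_combination E1_0_1_0 + (((-1:k)) * lam 0 2 + ((-1:k)) * lam 1 0 + lam 2 0) * h20
        · show lam 2 1 = (lam 0 0 + lam 1 2) + lam 0 1
          linear_combination E1_0_1_0 + E1_0_1_2 + E1_0_2_0 + (((-1:k)) * lam 0 1 + ((-1:k)) * lam 1 2 + lam 2 1) * h20
        · show lam 2 2 = (lam 0 1 + lam 1 1) + lam 0 2
          linear_combination E1_0_1_0 + E1_0_1_1 + E1_0_2_0 + (lam 0 0 + ((-1:k)) * lam 0 1 + ((-1:k)) * lam 0 2 + ((-1:k)) * lam 1 1 + lam 2 2) * h20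
        · show lam 0 0 = (lam 0 0 + lam 1 2) + lam 1 0
          linear_combination E1_0_1_0 + E1_0_1_1 + E1_1_0_0 + E1_1_0_2 + (((-1:k)) * lam 0 2 + ((-1:k)) * lam 1 0 + ((-1:k)) * lam 1 1 + lam 2 0 + lam 2 2) * h20
        · show lam 0 1 = (lam 0 1 + lam 1 1) + lam 1 1
          linear_combination (((-1:k)) * lam 1 1) * h20
        · show lam 0 2 = (lam 0 2 + lam 1 0) + lam 1 2
          linear_combination E1_0_1_0 + E1_0_1_1 + E1_1_0_0 + E1_1_0_2 + (((-1:k)) * lam 0 2 + ((-1:k)) * lam 1 0 + ((-1:k)) * lam 1 1 + lam 2 0 + lam 2 2) * h20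
        · show lam 1 0 = (lam 0 1 + lam 1 1) + lam 2 0
          linear_combination E1_0_1_1 + E1_0_2_0 + E1_1_0_0 + (((-1:k)) * lam 0 1 + lam 1 0 + ((-1:k)) * lam 1 1 + ((-1:k)) * lam 2 0 + lam 2 2) * h20
        · show lam 1 1 = (lam 0 2 + lam 1 0) + lam 2 1
          linear_combination E1_0_1_0 + E1_0_1_2 + E1_1_0_2 + (((-1:k)) * lam 0 2 + ((-1:k)) * lam 1 0 + lam 2 0) * h20
        · show lam 1 2 = (lam 0 0 + lam 1 2) + lam 2 2
          linear_combination E1_1_0_0 + (((-1:k)) * lam 0 0) * h20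
      · -- σ = transp 0 * transp 2
        subst h; fin_cases i <;> fin_cases l
        · show lam 1 0 = (lam 0 1 + lam 2 0) + lam 0 0
          linear_combination E1_0_2_0 + (((-1:k)) * lam 0 1 + lam 1 0 + ((-1:k)) * lam 2 0) * h20
        · show lam 1 1 = (lam 0 2 + lam 2 2) + lam 0 1
          linear_combination E1_0_1_0 + E1_0_1_1 + E1_0_2_0 + (lam 0 0 + ((-1:k)) * lam 0 1 + ((-1:k)) * lam 0 2) * h20
        · show lam 1 2 = (lam 0 0 + lam 2 1) + lam 0 2
          linear_combination E1_0_1_2 + (((-1:k)) * lam 0 0) * h20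
        · show lam 2 0 = (lam 0 2 + lam 2 2) + lam 1 0
          linear_combination E1_0_1_0 + E1_1_0_0 + (((-1:k)) * lam 0 2 + ((-1:k)) * lam 1 0 + lam 2 0) * h20
        · show lam 2 1 = (lam 0 0 + lam 2 1) + lam 1 1
          linear_combination E1_0_1_1 + E1_1_0_0 + (((-1:k)) * lam 0 0 + ((-1:k)) * lam 1 1 + lam 2 2) * h20
        · show lam 2 2 = (lam 0 1 + lam 2 0) + lam 1 2
          linear_combination E1_0_1_0 + E1_0_1_1 + E1_0_2_0 + E1_1_0_2 + (lam 0 0 + ((-1:k)) * lam 0 1 + ((-1:k)) * lam 0 2 + ((-1:k)) * lam 1 1 + lam 2 2) * h20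
        · show lam 0 0 = (lam 0 0 + lam 2 1) + lam 2 0
          linear_combination E1_0_1_1 + E1_0_1_2 + E1_1_0_0 + E1_1_0_2 + (((-1:k)) * lam 0 0 + ((-1:k)) * lam 1 1 + lam 2 2) * h20
        · show lam 0 1 = (lam 0 1 + lam 2 0) + lam 2 1
          linear_combination E1_0_1_1 + E1_0_1_2 + E1_1_0_0 + E1_1_0_2 + (((-1:k)) * lam 0 0 + ((-1:k)) * lam 1 1 + lam 2 2) * h20
        · show lam 0 2 = (lam 0 2 + lam 2 2) + lam 2 2
          linear_combination (((-1:k)) * lam 2 2) * h20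
    refine ⟨permB lam, ?_, ?_⟩
    · intro σ τ i
      rcases perm_cases τ with h | h | h | h | h | h
      · subst h
        rw [mul_one, show permB lam (1 : Equiv.Perm (ZMod 3)) i = 0 from rfl,
          show ((1 : Equiv.Perm (ZMod 3)) i) = i from rfl, add_zero]
      · subst h
        rw [show permB lam (transp 0) i = lam 0 i from rfl]
        exact G σ 0 i
      · subst h
        rw [show permB lam (transp 1) i = lam 1 i from rfl]
        exact G σ 1 i
      · subst h
        rw [show permB lam (transp 2) i = lam 2 i from rfl]
        exact G σ 2 i
      · subst h
        rw [show σ * (transp 0 * transp 1) = σ * transp 0 * transp 1 from (mul_assoc _ _ _).symm,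
          G (σ * transp 0) 1 i, G σ 0 (transp 1 i),
          show (transp 0 * transp 1) i = transp 0 (transp 1 i) from rfl,
          show permB lam (transp 0 * transp 1) i = lam 0 (rackOp 1 i) + lam 1 i from rfl,
          transp_app 1 i]
        ring
      · subst h
        rw [show σ * (transp 0 * transp 2) = σ * transp 0 * transp 2 from (mul_assoc _ _ _).symm,
          G (σ * transp 0) 2 i, G σ 0 (transp 2 i),
          show (transp 0 * transp 2) i = transp 0 (transp 2 i) from rfl,
          show permB lam (transp 0 * transp 2) i = lam 0 (rackOp 2 i) + lam 2 i from rfl,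
          transp_app 2 i]
        ring
    · intro i j
      fin_cases i <;> rfl
end

section
/- Under the presentation hypotheses, if μ satisfies μ(i,j) = μ(i▷j, i) = μ(j, i▷j) for all i, j (condition eq:mij) and μ(i,j) + μ(k▷i, k▷j) = λ(k,i)(λ(k,i▷j) + λ(i,j)) + λ(k,j)(λ(k,i) + λ(j,i▷j)) + λ(k,i▷j)(λ(k,j) + λ(i▷j,i)) for all i, j, k (condition eq:rel), then the algebra A_{λμ} is nontrivial, i.e., 1 ≠ 0 in A_{λμ}. -/
/-- The defining relations of the algebra `A_{λμ}`: `X_g X_h = X_{gh}`, `X_1 = 1`,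
`X_g y_i = (y_{ρ(g)(i)} + b(g,i)) X_g`, and the deformed quadratic relations
`y_i y_j + y_{i▷j} y_i + y_j y_{i▷j} + λ(i,j) y_i + λ(i▷j,i) y_{i▷j} + λ(j,i▷j) y_j + μ(i,j) = 0`. -/
def ARel (k : Type*) [Field k] {G : Type*} [Group G] (g : ZMod 3 → G)
    (ρ : G →* Equiv.Perm (ZMod 3)) (b : G → ZMod 3 → k) (μ : ZMod 3 → ZMod 3 → k)
    (u v : FreeAlgebra k (G ⊕ ZMod 3)) : Prop :=
  (∃ a c : G, u = FreeAlgebra.ι k (Sum.inl a) * FreeAlgebra.ι k (Sum.inl c) ∧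
      v = FreeAlgebra.ι k (Sum.inl (a * c))) ∨
  (u = FreeAlgebra.ι k (Sum.inl (1 : G)) ∧ v = 1) ∨
  (∃ (a : G) (i : ZMod 3),
      u = FreeAlgebra.ι k (Sum.inl a) * FreeAlgebra.ι k (Sum.inr i) ∧
      v = (FreeAlgebra.ι k (Sum.inr (ρ a i)) + algebraMap k _ (b a i)) *
            FreeAlgebra.ι k (Sum.inl a)) ∨
  (∃ i j : ZMod 3,
      u = FreeAlgebra.ι k (Sum.inr i) * FreeAlgebra.ι k (Sum.inr j) +
            FreeAlgebra.ι k (Sum.inr (rackOp i j)) * FreeAlgebra.ι k (Sum.inr i) +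
            FreeAlgebra.ι k (Sum.inr j) * FreeAlgebra.ι k (Sum.inr (rackOp i j)) +
            b (g i) j • FreeAlgebra.ι k (Sum.inr i) +
            b (g (rackOp i j)) i • FreeAlgebra.ι k (Sum.inr (rackOp i j)) +
            b (g j) (rackOp i j) • FreeAlgebra.ι k (Sum.inr j) +
            algebraMap k _ (μ i j) ∧
      v = 0)


/-!
We construct a nonzero representation of `A_{λμ}`. Conjugation by `X_h` acts on the generators
as the substitution `y_i ↦ y_{ρ(h) i} + b(h, i)`; condition eq:rel says exactly that the
substitution attached to a generator `g_l` maps each quadratic relation to another one, and the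
cocycle identity propagates this to all of `G = ⟨g_0, g_1, g_2⟩`. So if `P_0, P_1, P_2` in a
nonzero algebra `B` satisfy the quadratic relations, then `X_a` acting on `G → B` by right
translation and `y_i` acting by pointwise multiplication with `h ↦ P_{ρ(h) i} + b(h, i)` respect
all defining relations.

To find `P`: the cocycle identity forces `λ(i, i) = γ` and `λ(i, j) = β_i` for `i ≠ j`, with
`β_0 + β_1 + β_2 = γ`, and then eq:mij and eq:rel make `μ` constant off the diagonal. After the
shift `P_i = Q_i + β_i` every linear coefficient becomes `γ`, and `Q = (u, w, w)` works as soon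
as `u, w` are roots of `X² + γX + ν` with `uw + wu + γ(u + w) = κ + ν`. Such a pair exists among
`2 × 2` matrices over `k[s]/(s² − κ − ν)`.
-/

theorem rackOp_self (i : ZMod 3) : rackOp i i = i := by revert i; decide

theorem rackOp_comm (i j : ZMod 3) : rackOp i j = rackOp j i := by revert i j; decide

theorem rackOp_rackOp (i j : ZMod 3) : rackOp i (rackOp i j) = j := by revert i j; decide

theorem rackOp_rackOp_left (i j : ZMod 3) : rackOp (rackOp i j) i = j := by revert i j; decide

theorem rackOp_rackOp_right (i j : ZMod 3) : rackOp j (rackOp i j) = i := by revert i j; decide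

theorem Equiv.Perm.map_rackOp (σ : Equiv.Perm (ZMod 3)) (i j : ZMod 3) :
    σ (rackOp i j) = rackOp (σ i) (σ j) := by
  revert σ i j; decide

theorem ZMod.three_cases (i : ZMod 3) : i = 0 ∨ i = 1 ∨ i = 2 := by revert i; decide

section QuadRel

variable {k B : Type*} [CommRing k] [Ring B] [Algebra k B]

def quadRel (lam μ : ZMod 3 → ZMod 3 → k) (y : ZMod 3 → B) (i j : ZMod 3) : B :=
  y i * y j + y (rackOp i j) * y i + y j * y (rackOp i j) + lam i j • y i +
    lam (rackOp i j) i • y (rackOp i j) + lam j (rackOp i j) • y j + algebraMap k B (μ i j)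

theorem AlgHom.map_quadRel {C : Type*} [Ring C] [Algebra k C] (f : B →ₐ[k] C)
    (lam μ : ZMod 3 → ZMod 3 → k) (y : ZMod 3 → B) (i j : ZMod 3) :
    f (quadRel lam μ y i j) = quadRel lam μ (f ∘ y) i j := by
  simp [quadRel]

/-- The constant term of the shifted relation is the relation evaluated at the shift `a`. -/
theorem quadRel_shift (lam μ lam' μ' : ZMod 3 → ZMod 3 → k) (σ : ZMod 3 → ZMod 3)
    (hσ : ∀ i j, σ (rackOp i j) = rackOp (σ i) (σ j)) (a : ZMod 3 → k)
    (hlam : ∀ i j, lam' (σ i) (σ j) = lam i j + a j + a (rackOp i j))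
    (hμ : ∀ i j, μ' (σ i) (σ j) = quadRel lam μ a i j) (y : ZMod 3 → B) (i j : ZMod 3) :
    quadRel lam μ (fun m => y (σ m) + algebraMap k B (a m)) i j =
      quadRel lam' μ' y (σ i) (σ j) := by
  simp only [quadRel, smul_eq_mul, Algebra.algebraMap_self, RingHom.id_apply] at hμ
  simp only [quadRel, ← hσ, hlam, hμ, rackOp_rackOp_left, rackOp_rackOp_right,
    Algebra.algebraMap_eq_smul_one, add_mul, mul_add, smul_mul_assoc, mul_smul_comm, one_mul,
    mul_one, smul_add, add_smul, smul_smul]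
  match_scalars <;> ring

end QuadRel

section CocycleShift

variable {k G B : Type*} [CommRing k] [Group G] [Ring B] [Algebra k B]

/-- Conjugation by `X_h` on the generators `y_i`; `h ↦ cocycleShift ρ b h` is a right action. -/
def cocycleShift (ρ : G →* Equiv.Perm (ZMod 3)) (b : G → ZMod 3 → k) (h : G)
    (y : ZMod 3 → B) : ZMod 3 → B :=
  fun i => y (ρ h i) + algebraMap k B (b h i)

variable {ρ : G →* Equiv.Perm (ZMod 3)} {b : G → ZMod 3 → k}

theorem cocycleShift_mul (hb : ∀ (u v : G) (i : ZMod 3), b (u * v) i = b u (ρ v i) + b v i)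
    (u v : G) (y : ZMod 3 → B) :
    cocycleShift ρ b (u * v) y = cocycleShift ρ b v (cocycleShift ρ b u y) := by
  funext i
  simp only [cocycleShift, hb, map_mul, Equiv.Perm.mul_apply, map_add, add_assoc]

theorem cocycleShift_one (hb : ∀ (u v : G) (i : ZMod 3), b (u * v) i = b u (ρ v i) + b v i)
    (y : ZMod 3 → B) : cocycleShift ρ b 1 y = y := by
  have hb1 (i : ZMod 3) : b 1 i = 0 := by simpa using hb 1 1 i
  funext i
  simp [cocycleShift, hb1]

theorem quadRel_cocycleShift_of_closure
    (hb : ∀ (u v : G) (i : ZMod 3), b (u * v) i = b u (ρ v i) + b v i)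
    (lam μ : ZMod 3 → ZMod 3 → k) {S : Set G} (hS : Subgroup.closure S = ⊤)
    (hSshift : ∀ s ∈ S, ∀ (y : ZMod 3 → B) (i j : ZMod 3),
      quadRel lam μ (cocycleShift ρ b s y) i j = quadRel lam μ y (ρ s i) (ρ s j))
    (h : G) (y : ZMod 3 → B) (i j : ZMod 3) :
    quadRel lam μ (cocycleShift ρ b h y) i j = quadRel lam μ y (ρ h i) (ρ h j) := by
  have hh : h ∈ Subgroup.closure S := hS ▸ Subgroup.mem_top h
  induction hh using Subgroup.closure_induction generalizing y i j with
  | mem s hs => exact hSshift s hs y i j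
  | one => simp [cocycleShift_one hb]
  | mul u v _ _ hu hv => rw [cocycleShift_mul hb, hv, hu, map_mul]; rfl
  | inv u _ hu =>
    have := hu (cocycleShift ρ b u⁻¹ y) (ρ u⁻¹ i) (ρ u⁻¹ j)
    rwa [← cocycleShift_mul hb, inv_mul_cancel, cocycleShift_one hb, ← Equiv.Perm.mul_apply,
      ← Equiv.Perm.mul_apply, ← map_mul, mul_inv_cancel, map_one, Equiv.Perm.one_apply,
      Equiv.Perm.one_apply, eq_comm] at this

end CocycleShift

theorem ARel_quotient_nontrivial_of_solution {k : Type*} [Field k] {G : Type*} [Group G]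
    (g : ZMod 3 → G) (ρ : G →* Equiv.Perm (ZMod 3)) (b : G → ZMod 3 → k)
    (hb : ∀ (u v : G) (i : ZMod 3), b (u * v) i = b u (ρ v i) + b v i)
    (μ : ZMod 3 → ZMod 3 → k) {B : Type*} [Ring B] [Algebra k B] [Nontrivial B]
    (P : ZMod 3 → B)
    (hP : ∀ (h : G) (i j : ZMod 3),
      quadRel (fun i j => b (g i) j) μ (cocycleShift ρ b h P) i j = 0) :
    (1 : RingQuot (ARel k g ρ b μ)) ≠ 0 := by
  let Y : ZMod 3 → G → B := fun i h => cocycleShift ρ b h P i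
  let F : FreeAlgebra k (G ⊕ ZMod 3) →ₐ[k] Module.End k (G → B) := FreeAlgebra.lift k
    (Sum.elim (fun a => LinearMap.funLeft k B (· * a)) fun i => Algebra.lmul k (G → B) (Y i))
  have hY : (F ∘ fun i => FreeAlgebra.ι k (Sum.inr i)) = Algebra.lmul k (G → B) ∘ Y := by
    funext i
    simp [F]
  have hF : ∀ ⦃u v⦄, ARel k g ρ b μ u v → F u = F v := by
    rintro u v (⟨a, c, rfl, rfl⟩ | ⟨rfl, rfl⟩ | ⟨a, i, rfl, rfl⟩ | ⟨i, j, rfl, rfl⟩)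
    · ext f h
      simp [F, mul_assoc]
    · ext f h
      simp [F]
    · ext f h
      simp [F, Y, cocycleShift, hb, add_mul, add_assoc, Algebra.smul_def]
    · change F (quadRel (fun i j => b (g i) j) μ (fun i => FreeAlgebra.ι k (Sum.inr i)) i j) = F 0
      have hYij : quadRel (fun i j => b (g i) j) μ Y i j = 0 := funext fun h =>
        (AlgHom.map_quadRel (Pi.evalAlgHom k (fun _ : G => B) h) _ μ Y i j).trans (hP h i j)
      rw [AlgHom.map_quadRel, hY, ← AlgHom.map_quadRel, hYij, map_zero, map_zero]
  have := (RingQuot.liftAlgHom k ⟨F, hF⟩).toRingHom.domain_nontrivial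
  exact one_ne_zero

section Generators

variable {k G : Type*} [CommRing k] [Group G] {g : ZMod 3 → G} {ρ : G →* Equiv.Perm (ZMod 3)}
  {b : G → ZMod 3 → k}

theorem cocycle_rackOp (hg : ∀ i j : ZMod 3, g i * g j = g (rackOp i j) * g i)
    (hρ : ∀ i j : ZMod 3, ρ (g i) j = rackOp i j)
    (hb : ∀ (u v : G) (i : ZMod 3), b (u * v) i = b u (ρ v i) + b v i) (i j m : ZMod 3) :
    b (g (rackOp i j)) (rackOp i m) + b (g i) m = b (g i) (rackOp j m) + b (g j) m := by
  have h := hb (g i) (g j) m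
  rwa [hg, hb, hρ, hρ] at h

theorem quadRel_cocycleShift [CharP k 2] (hgen : Subgroup.closure (Set.range g) = ⊤)
    (hg : ∀ i j : ZMod 3, g i * g j = g (rackOp i j) * g i)
    (hρ : ∀ i j : ZMod 3, ρ (g i) j = rackOp i j)
    (hb : ∀ (u v : G) (i : ZMod 3), b (u * v) i = b u (ρ v i) + b v i)
    {μ : ZMod 3 → ZMod 3 → k}
    (hrel : ∀ i j l : ZMod 3,
      μ i j + μ (rackOp l i) (rackOp l j) =
        b (g l) i * (b (g l) (rackOp i j) + b (g i) j) +
        b (g l) j * (b (g l) i + b (g j) (rackOp i j)) +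
        b (g l) (rackOp i j) * (b (g l) j + b (g (rackOp i j)) i))
    {B : Type*} [Ring B] [Algebra k B] (h : G) (y : ZMod 3 → B) (i j : ZMod 3) :
    quadRel (fun i j => b (g i) j) μ (cocycleShift ρ b h y) i j =
      quadRel (fun i j => b (g i) j) μ y (ρ h i) (ρ h j) := by
  refine quadRel_cocycleShift_of_closure hb _ μ hgen ?_ h y i j
  rintro _ ⟨l, rfl⟩ y i j
  refine quadRel_shift _ _ _ _ _ (ρ (g l)).map_rackOp _ (fun i j => ?_) (fun i j => ?_) y i j
  · rw [hρ, hρ]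
    linear_combination cocycle_rackOp hg hρ hb l i j - b (g l) j * CharTwo.two_eq_zero (R := k)
  · rw [hρ, hρ]
    simp only [quadRel, smul_eq_mul, Algebra.algebraMap_self, RingHom.id_apply]
    linear_combination hrel i j l - μ i j * CharTwo.two_eq_zero (R := k)

end Generators

section RackLam

variable {k : Type*} [CommRing k]

def rackLam (γ : k) (β : ZMod 3 → k) (i j : ZMod 3) : k := if i = j then γ else β i

theorem exists_eq_rackLam [CharP k 2] (Λ : ZMod 3 → ZMod 3 → k)
    (hΛ : ∀ i j m, Λ (rackOp i j) (rackOp i m) + Λ i m = Λ i (rackOp j m) + Λ j m) :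
    ∃ γ β, Λ = rackLam γ β ∧ β 0 + β 1 + β 2 = γ := by
  have diag (i j : ZMod 3) : Λ (rackOp i j) (rackOp i j) = Λ j j := by
    have h := hΛ i j j
    rw [rackOp_self] at h
    linear_combination h
  have row (i j : ZMod 3) : Λ i (rackOp i j) = Λ i j := by
    have h₁ := hΛ i j i
    have h₂ := hΛ i (rackOp i j) i
    rw [rackOp_self, rackOp_comm j] at h₁
    rw [rackOp_self, rackOp_rackOp, rackOp_rackOp_left] at h₂
    grind
  refine ⟨Λ 0 0, fun i => Λ i (i + 1), funext₂ fun i j => ?_, ?_⟩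
  · rcases eq_or_ne i j with rfl | hij
    · simpa [rackLam, show rackOp (2 * i) 0 = i by revert i; decide] using diag (2 * i) 0
    · rcases (show j = i + 1 ∨ j = rackOp i (i + 1) by revert i j; decide) with rfl | rfl
      · simp [rackLam, hij]
      · simp [rackLam, hij, row]
  · have h := hΛ 0 1 0
    have r₀ := row 0 1
    have r₁ := row 1 0
    norm_num [rackOp] at h r₀ r₁ ⊢
    reduce_mod_char at h r₀ r₁ ⊢
    grind

theorem rackLam_add_add [CharP k 2] (γ : k) (β : ZMod 3 → k) (hβ : β 0 + β 1 + β 2 = γ)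
    (i j : ZMod 3) : rackLam γ β i j + β j + β (rackOp i j) = γ := by
  rcases ZMod.three_cases i with rfl | rfl | rfl <;>
    rcases ZMod.three_cases j with rfl | rfl | rfl <;>
    norm_num [rackLam, rackOp] <;> reduce_mod_char <;> grind

theorem exists_quadRel_rackLam_eq_ite [CharP k 2] (γ : k) (β : ZMod 3 → k)
    (μ : ZMod 3 → ZMod 3 → k) (hβ : β 0 + β 1 + β 2 = γ)
    (hmij : ∀ i j : ZMod 3, μ i j = μ (rackOp i j) i ∧ μ i j = μ j (rackOp i j))
    (hrel : ∀ i j l : ZMod 3,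
      μ i j + μ (rackOp l i) (rackOp l j) =
        rackLam γ β l i * (rackLam γ β l (rackOp i j) + rackLam γ β i j) +
        rackLam γ β l j * (rackLam γ β l i + rackLam γ β j (rackOp i j)) +
        rackLam γ β l (rackOp i j) * (rackLam γ β l j + rackLam γ β (rackOp i j) i)) :
    ∃ ν κ : k, ∀ i j, (if i = j then ν else κ) = quadRel (rackLam γ β) μ β i j := by
  refine ⟨μ 0 0 + β 0 * β 0 + γ * β 0, μ 0 1 + β 0 * β 1 + β 1 * β 2 + β 2 * β 0 + γ * γ, ?_⟩
  have h₁ := hrel 0 0 2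
  have h₂ := hrel 0 0 1
  have h₃ := hrel 0 1 0
  obtain ⟨h₄, h₅⟩ := hmij 0 1
  obtain ⟨h₆, h₇⟩ := hmij 0 2
  clear hrel hmij
  intro i j
  rcases ZMod.three_cases i with rfl | rfl | rfl <;>
    rcases ZMod.three_cases j with rfl | rfl | rfl <;>
    norm_num [quadRel, rackLam, rackOp] at * <;> reduce_mod_char at * <;> grind

end RackLam

section TwoRoots

variable {k B : Type*} [CommRing k] [CharP k 2] [Ring B] [Algebra k B]

theorem quadRel_ite_eq_zero (γ ν κ : k) (u w : B)
    (hu : u * u + γ • u + algebraMap k B ν = 0) (hw : w * w + γ • w + algebraMap k B ν = 0)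
    (huw : u * w + w * u + γ • u + γ • w + algebraMap k B (κ + ν) = 0) (i j : ZMod 3) :
    quadRel (fun _ _ => γ) (fun i j => if i = j then ν else κ) (fun m => if m = 0 then u else w)
      i j = 0 := by
  rcases ZMod.three_cases i with rfl | rfl | rfl <;>
    rcases ZMod.three_cases j with rfl | rfl | rfl <;>
    simp +decide only [quadRel, if_true, if_false] <;>
    simp only [Algebra.algebraMap_eq_smul_one] at * <;>
    first
    | linear_combination (norm := match_scalars) hu <;> grind
    | linear_combination (norm := match_scalars) hw <;> grind
    | linear_combination (norm := match_scalars) hw + huw <;> grind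

end TwoRoots

section RackMatrix

variable {k R : Type*} [CommRing k] [CommRing R] [Algebra k R]

/-- A root of `X² + γX + ν` for every `a` (the companion matrix for `a = 0`). -/
def rackMatrix (γ ν : k) (a : R) : Matrix (Fin 2) (Fin 2) R :=
  !![a, a * a + algebraMap k R γ * a + algebraMap k R ν; 1, algebraMap k R γ + a]

theorem rackMatrix_mul_self [CharP R 2] (γ ν : k) (a : R) :
    rackMatrix γ ν a * rackMatrix γ ν a + γ • rackMatrix γ ν a + algebraMap k _ ν = 0 := by
  ext i j
  fin_cases i <;> fin_cases j <;>
    simp only [Matrix.add_apply, Matrix.smul_apply, Matrix.mul_apply, Fin.sum_univ_two,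
      Matrix.algebraMap_matrix_apply, Matrix.zero_apply] <;>
    simp [rackMatrix, Algebra.smul_def] <;> grind

theorem rackMatrix_zero_anticomm [CharP R 2] (γ ν κ : k) (s : R)
    (hs : s * s = algebraMap k R (κ + ν)) :
    rackMatrix γ ν 0 * rackMatrix γ ν s + rackMatrix γ ν s * rackMatrix γ ν 0 +
      γ • rackMatrix γ ν 0 + γ • rackMatrix γ ν s + algebraMap k _ (κ + ν) = 0 := by
  ext i j
  fin_cases i <;> fin_cases j <;>
    simp only [Matrix.add_apply, Matrix.smul_apply, Matrix.mul_apply, Fin.sum_univ_two,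
      Matrix.algebraMap_matrix_apply, Matrix.zero_apply] <;>
    simp [rackMatrix, Algebra.smul_def] <;> grind

end RackMatrix

section SqrtAdjoin

open Polynomial

variable {k : Type*} [Field k]

instance (c : k) : Nontrivial (AdjoinRoot (X ^ 2 - C c)) :=
  AdjoinRoot.nontrivial _ (by rw [degree_X_pow_sub_C two_pos]; decide)

instance [CharP k 2] (c : k) : CharP (AdjoinRoot (X ^ 2 - C c)) 2 :=
  charP_of_injective_algebraMap (algebraMap k _).injective 2

theorem AdjoinRoot.root_mul_self_X_sq_sub_C (c : k) :
    root (X ^ 2 - C c) * root (X ^ 2 - C c) = algebraMap k _ c := by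
  have h := AdjoinRoot.eval₂_root (X ^ 2 - C c)
  rw [eval₂_sub, eval₂_X_pow, eval₂_C, sub_eq_zero] at h
  rw [← sq, AdjoinRoot.algebraMap_eq]
  exact h

end SqrtAdjoin

theorem ARel_quotient_nontrivial_general {k : Type*} [Field k] [CharP k 2] {G : Type*} [Group G]
    (g : ZMod 3 → G) (hgen : Subgroup.closure (Set.range g) = ⊤)
    (hg : ∀ i j : ZMod 3, g i * g j = g (rackOp i j) * g i)
    (ρ : G →* Equiv.Perm (ZMod 3)) (hρ : ∀ i j : ZMod 3, ρ (g i) j = rackOp i j)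
    (b : G → ZMod 3 → k)
    (hb : ∀ (u v : G) (i : ZMod 3), b (u * v) i = b u (ρ v i) + b v i)
    (lam : ZMod 3 → ZMod 3 → k) (hlam : ∀ i j : ZMod 3, lam i j = b (g i) j)
    (μ : ZMod 3 → ZMod 3 → k)
    (hmij : ∀ i j : ZMod 3, μ i j = μ (rackOp i j) i ∧ μ i j = μ j (rackOp i j))
    (hrel : ∀ i j l : ZMod 3,
      μ i j + μ (rackOp l i) (rackOp l j) =
        lam l i * (lam l (rackOp i j) + lam i j) +
        lam l j * (lam l i + lam j (rackOp i j)) +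
        lam l (rackOp i j) * (lam l j + lam (rackOp i j) i)) :
    (1 : RingQuot (ARel k g ρ b μ)) ≠ 0 := by
  obtain rfl : lam = fun i j => b (g i) j := funext₂ hlam
  obtain ⟨γ, β, hΛ, hβ⟩ := exists_eq_rackLam (fun i j => b (g i) j) (cocycle_rackOp hg hρ hb)
  obtain ⟨ν, κ, hνκ⟩ := exists_quadRel_rackLam_eq_ite γ β μ hβ hmij (by simpa only [← hΛ] using hrel)
  let s := AdjoinRoot.root (Polynomial.X ^ 2 - Polynomial.C (κ + ν))
  refine ARel_quotient_nontrivial_of_solution g ρ b hb μ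
    (fun m => rackMatrix γ ν (if m = 0 then 0 else s) + algebraMap k _ (β m)) fun h i j => ?_
  rw [quadRel_cocycleShift hgen hg hρ hb hrel, hΛ]
  refine (quadRel_shift (lam' := fun _ _ => γ) (μ' := fun i j => if i = j then ν else κ) _ _ id
    (fun _ _ => rfl) β (fun i j => (rackLam_add_add γ β hβ i j).symm) hνκ
    (fun m => rackMatrix γ ν (if m = 0 then 0 else s)) _ _).trans ?_
  have := quadRel_ite_eq_zero γ ν κ _ _ (rackMatrix_mul_self γ ν 0) (rackMatrix_mul_self γ ν s)
    (rackMatrix_zero_anticomm γ ν κ s (AdjoinRoot.root_mul_self_X_sq_sub_C _)) (ρ h i) (ρ h j)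
  simpa only [apply_ite, id_eq] using this

/-- Under the presentation hypotheses, if `μ` satisfies eq:mij and eq:rel
(with `λ(i,j) = b(g_i, j)`), then the algebra `A_{λμ}` is nontrivial. -/
theorem ARel_quotient_nontrivial {k : Type*} [Field k] [CharP k 2] {G : Type*} [Group G]
    (hG : ∃ a c : G, a * c ≠ c * a)
    (g : ZMod 3 → G) (hgen : Subgroup.closure (Set.range g) = ⊤)
    (hg : ∀ i j : ZMod 3, g i * g j = g (rackOp i j) * g i)
    (ρ : G →* Equiv.Perm (ZMod 3)) (hρ : ∀ i j : ZMod 3, ρ (g i) j = rackOp i j)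
    (hconj : ∀ (a : G) (i : ZMod 3), a * g i * a⁻¹ = g (ρ a i))
    (b : G → ZMod 3 → k)
    (hb : ∀ (u v : G) (i : ZMod 3), b (u * v) i = b u (ρ v i) + b v i)
    (lam : ZMod 3 → ZMod 3 → k) (hlam : ∀ i j : ZMod 3, lam i j = b (g i) j)
    (μ : ZMod 3 → ZMod 3 → k)
    (hmij : ∀ i j : ZMod 3, μ i j = μ (rackOp i j) i ∧ μ i j = μ j (rackOp i j))
    (hrel : ∀ i j l : ZMod 3,
      μ i j + μ (rackOp l i) (rackOp l j) =
        lam l i * (lam l (rackOp i j) + lam i j) +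
        lam l j * (lam l i + lam j (rackOp i j)) +
        lam l (rackOp i j) * (lam l j + lam (rackOp i j) i)) :
    (1 : RingQuot (ARel k g ρ b μ)) ≠ 0 :=
  ARel_quotient_nontrivial_general g hgen hg ρ hρ b hb lam hlam μ hmij hrel
end

section
/- The number of pairs (λ, μ) of functions ZMod 3 × ZMod 3 → F₂ such that λ satisfies λ(i, j▷k) + λ(j, k) = λ(i▷j, i▷k) + λ(i, k) for all i, j, k (condition eq:lij), μ satisfies μ(i,j) = μ(i▷j, i) = μ(j, i▷j) for all i, j (condition eq:mij), and μ(i,j) + μ(k▷i, k▷j) = λ(k,i)(λ(k,i▷j) + λ(i,j)) + λ(k,j)(λ(k,i) + λ(j,i▷j)) + λ(k,i▷j)(λ(k,j) + λ(i▷j,i)) for all i, j, k (condition eq:rel), is exactly 32. -/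
/-- Condition eq:lij. -/
def lijCond (lam : ZMod 3 → ZMod 3 → ZMod 2) : Prop :=
  ∀ i j l : ZMod 3,
    lam i (rackOp j l) + lam j l = lam (rackOp i j) (rackOp i l) + lam i l

/-- Condition eq:mij. -/
def mijCond (μ : ZMod 3 → ZMod 3 → ZMod 2) : Prop :=
  ∀ i j : ZMod 3, μ i j = μ (rackOp i j) i ∧ μ i j = μ j (rackOp i j)

/-- Condition eq:rel. -/
def relCond (lam μ : ZMod 3 → ZMod 3 → ZMod 2) : Prop :=
  ∀ i j l : ZMod 3,
    μ i j + μ (rackOp l i) (rackOp l j) =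
      lam l i * (lam l (rackOp i j) + lam i j) +
      lam l j * (lam l i + lam j (rackOp i j)) +
      lam l (rackOp i j) * (lam l j + lam (rackOp i j) i)

instance (lam : ZMod 3 → ZMod 3 → ZMod 2) : Decidable (lijCond lam) := by
  unfold lijCond; infer_instance
instance (μ : ZMod 3 → ZMod 3 → ZMod 2) : Decidable (mijCond μ) := by
  unfold mijCond; infer_instance
instance (lam μ : ZMod 3 → ZMod 3 → ZMod 2) : Decidable (relCond lam μ) := by
  unfold relCond; infer_instance

set_option maxRecDepth 40000 in
set_option maxHeartbeats 4000000 in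
lemma card_lij : Fintype.card {lam : ZMod 3 → ZMod 3 → ZMod 2 // lijCond lam} = 8 := by
  decide

set_option maxRecDepth 40000 in
set_option maxHeartbeats 40000000 in
lemma card_fiber : ∀ lam : ZMod 3 → ZMod 3 → ZMod 2, lijCond lam →
    Fintype.card {μ : ZMod 3 → ZMod 3 → ZMod 2 // mijCond μ ∧ relCond lam μ} = 4 := by
  decide

/-- Splitting equivalence. -/
def splitEquiv :
    {p : (ZMod 3 → ZMod 3 → ZMod 2) × (ZMod 3 → ZMod 3 → ZMod 2) //
      lijCond p.1 ∧ mijCond p.2 ∧ relCond p.1 p.2} ≃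
    Σ l : {lam : ZMod 3 → ZMod 3 → ZMod 2 // lijCond lam},
      {μ : ZMod 3 → ZMod 3 → ZMod 2 // mijCond μ ∧ relCond l.1 μ} where
  toFun p := ⟨⟨p.1.1, p.2.1⟩, ⟨p.1.2, p.2.2.1, p.2.2.2⟩⟩
  invFun x := ⟨(x.1.1, x.2.1), x.1.2, x.2.2.1, x.2.2.2⟩
  left_inv p := rfl
  right_inv x := rfl

/-- There are exactly 32 pairs `(λ, μ)` of functions
`ZMod 3 × ZMod 3 → F₂` satisfying conditions eq:lij, eq:mij and eq:rel. -/
theorem card_lifting_data :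
    Nat.card {p : (ZMod 3 → ZMod 3 → ZMod 2) × (ZMod 3 → ZMod 3 → ZMod 2) //
      lijCond p.1 ∧ mijCond p.2 ∧ relCond p.1 p.2} = 32 := by
  rw [Nat.card_congr splitEquiv, Nat.card_eq_fintype_card, Fintype.card_sigma]
  have h : ∀ l : {lam : ZMod 3 → ZMod 3 → ZMod 2 // lijCond lam},
      Fintype.card {μ : ZMod 3 → ZMod 3 → ZMod 2 // mijCond μ ∧ relCond l.1 μ} = 4 :=
    fun l => card_fiber l.1 l.2
  rw [Finset.sum_congr rfl (fun l _ => h l), Finset.sum_const, smul_eq_mul,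
    Finset.card_univ, card_lij]
end
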